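/- arXiv:math/0608713 — 9 statements merged into one kernel-verified Lean document; each statement's English description precedes it below -/
import Mathlib

section
/- Let δ ∈ [0,1]. Under Assumption (A), for any prior probability measure π on ℋ, the probability over X ~ P that there exists h ∈ ℋ with X ∈ B(h, δ·π({h})) is at most δ. -/
/-!
Both the bad event `B(h, t)` and the prior mass `π {h}` depend on `h` only through its measurable
atom. Points with distinct atoms are separated by measurable sets, so the masses of distinct atoms
add up to at most `1`; hence only countably many atoms carry mass, and a union bound over one
representative of each of them gives `P(⋃ₕ B(h, δ π{h})) ≤ ∑ δ π{h} ≤ δ`. Atoms of mass zero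
contribute nothing because `B(h, 0) = ∅`.
-/

open MeasureTheory Set
open scoped ENNReal

section MeasurableAtom

variable {β : Type*} [MeasurableSpace β]

theorem measure_measurableAtom (μ : Measure β) (x : β) : μ (measurableAtom x) = μ {x} :=
  le_antisymm
    (calc μ (measurableAtom x) ≤ μ (toMeasurable μ {x}) :=
          measure_mono (measurableAtom_subset (measurableSet_toMeasurable μ _)
            (subset_toMeasurable μ _ rfl))
      _ = μ {x} := measure_toMeasurable _)
    (measure_mono (singleton_subset_iff.2 (mem_measurableAtom_self x)))

theorem exists_measurableSet_of_notMem_measurableAtom {x y : β} (h : y ∉ measurableAtom x) :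
    ∃ s, x ∈ s ∧ MeasurableSet s ∧ y ∉ s := by
  simpa [measurableAtom] using h

/- Atoms need not be measurable, so they are enlarged to the pairwise disjoint measurable sets
`D i = ⋂ j ≠ i, S i j \ S j i`. -/
theorem sum_measure_measurableAtom_le {ι : Type*} (μ : Measure β) (s : Finset ι) {x : ι → β}
    (hx : InjOn (fun i ↦ measurableAtom (x i)) s) :
    ∑ i ∈ s, μ (measurableAtom (x i)) ≤ μ univ := by
  classical
  have hsep : ∀ i ∈ s, ∀ j ∈ s, i ≠ j →
      ∃ S, x i ∈ S ∧ MeasurableSet S ∧ x j ∉ S := fun i hi j hj hij ↦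
    exists_measurableSet_of_notMem_measurableAtom fun hji ↦
      hij (hx hi hj (measurableAtom_eq_of_mem hji).symm)
  choose! S hS_mem hS_meas hS_notMem using hsep
  set D : ι → Set β := fun i ↦ ⋂ j ∈ s.erase i, S i j \ S j i
  have hD_meas : ∀ i ∈ s, MeasurableSet (D i) := fun i hi ↦
    Finset.measurableSet_biInter _ fun j hj ↦
      have hj' := Finset.mem_erase.1 hj
      (hS_meas i hi j hj'.2 hj'.1.symm).diff (hS_meas j hj'.2 i hi hj'.1)
  have hD_atom : ∀ i ∈ s, measurableAtom (x i) ⊆ D i := fun i hi ↦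
    subset_iInter₂ fun j hj ↦
      have hj' := Finset.mem_erase.1 hj
      subset_sdiff.2 ⟨measurableAtom_subset (hS_meas i hi j hj'.2 hj'.1.symm)
          (hS_mem i hi j hj'.2 hj'.1.symm),
        subset_compl_iff_disjoint_right.1 <| measurableAtom_subset
          (hS_meas j hj'.2 i hi hj'.1).compl (hS_notMem j hj'.2 i hi hj'.1)⟩
  have hD_disj : (s : Set ι).PairwiseDisjoint D := fun i hi j hj hij ↦
    disjoint_left.2 fun z hzi hzj ↦
      (mem_iInter₂.1 hzj i (Finset.mem_erase.2 ⟨hij, hi⟩)).2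
        (mem_iInter₂.1 hzi j (Finset.mem_erase.2 ⟨hij.symm, hj⟩)).1
  calc ∑ i ∈ s, μ (measurableAtom (x i)) ≤ ∑ i ∈ s, μ (D i) :=
        Finset.sum_le_sum fun i hi ↦ measure_mono (hD_atom i hi)
    _ = μ (⋃ i ∈ s, D i) := (measure_biUnion_finset hD_disj hD_meas).symm
    _ ≤ μ univ := measure_mono (subset_univ _)

theorem tsum_measure_measurableAtom_le {ι : Type*} (μ : Measure β) {x : ι → β}
    (hx : Function.Injective fun i ↦ measurableAtom (x i)) :
    ∑' i, μ (measurableAtom (x i)) ≤ μ univ :=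
  tsum_le_of_sum_le' zero_le fun s ↦ sum_measure_measurableAtom_le μ s hx.injOn

theorem exists_countable_measurableAtom_representatives (μ : Measure β) [IsFiniteMeasure μ] :
    ∃ T : Set β, T.Countable ∧ ∑' y : T, μ {(y : β)} ≤ μ univ ∧
      ∀ x, μ {x} ≠ 0 → ∃ y ∈ T, measurableAtom y = measurableAtom x := by
  set r := rangeSplitting (measurableAtom : β → Set β)
  have hr : ∀ a, measurableAtom (r a) = a := apply_rangeSplitting _
  set f := fun a ↦ μ {r a}
  have hsum : ∑' a, f a ≤ μ univ := by
    simpa only [f, ← measure_measurableAtom] using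
      tsum_measure_measurableAtom_le μ (x := r) fun a b hab ↦ Subtype.ext (by simpa [hr] using hab)
  refine ⟨r '' Function.support f,
    (Summable.countable_support_ennreal (hsum.trans_lt (measure_lt_top μ univ)).ne).image r,
    ?_, fun x hx ↦ ⟨r ⟨measurableAtom x, mem_range_self x⟩, mem_image_of_mem r ?_, hr _⟩⟩
  · rw [tsum_image (fun y ↦ μ {y}) (rangeSplitting_injective _).injOn, tsum_subtype_support]
    exact hsum
  · simpa [f, ← measure_measurableAtom, hr] using hx

end MeasurableAtom

/-- **Abstract Occam's razor** (first part).
Under Assumption (A) — bad events `B h t` of probability at most `t` for `t ∈ [0,1]`,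
jointly measurable, with `B h 0 = ∅` — for any prior probability measure `π` on the pool `H`
and any `δ ∈ [0,1]`, the probability over `X ~ P` that there exists `h ∈ H` with
`X ∈ B(h, δ·π({h}))` is at most `δ`. -/
theorem abstract_occam_razor_exists
    {𝒳 : Type*} [MeasurableSpace 𝒳] {H : Type*} [MeasurableSpace H]
    (P : Measure 𝒳) [IsProbabilityMeasure P]
    (B : H → ℝ → Set 𝒳)
    (hBprob : ∀ (h : H) (t : ℝ), 0 ≤ t → t ≤ 1 → P (B h t) ≤ ENNReal.ofReal t)
    (hBmeas : MeasurableSet {p : 𝒳 × H × ℝ | p.1 ∈ B p.2.1 p.2.2})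
    (hB0 : ∀ h : H, B h 0 = ∅)
    (δ : ℝ) (hδ0 : 0 ≤ δ) (hδ1 : δ ≤ 1)
    (π : Measure H) [IsProbabilityMeasure π] :
    P {x : 𝒳 | ∃ h : H, x ∈ B h (δ * (π {h}).toReal)} ≤ ENNReal.ofReal δ := by
  obtain ⟨T, hT_countable, hT_sum, hT_cover⟩ := exists_countable_measurableAtom_representatives π
  have hB_atom {h h' : H} (hh' : measurableAtom h' = measurableAtom h) (t : ℝ) :
      B h t ⊆ B h' t := fun x hx ↦
    mem_of_mem_measurableAtom (s := {k | x ∈ B k t}) (hh' ▸ mem_measurableAtom_self h')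
      (measurable_prodMk_left.comp (measurable_id.prodMk measurable_const) hBmeas) hx
  have hcover : {x : 𝒳 | ∃ h : H, x ∈ B h (δ * (π {h}).toReal)} ⊆
      ⋃ h ∈ T, B h (δ * (π {h}).toReal) := by
    rintro x ⟨h, hx⟩
    have hπh : π {h} ≠ 0 := fun h0 ↦ by simp [h0, hB0] at hx
    obtain ⟨h', hh'T, hh'⟩ := hT_cover h hπh
    have hπ : π {h'} = π {h} := by rw [← measure_measurableAtom, hh', measure_measurableAtom]
    exact mem_biUnion hh'T (hπ ▸ hB_atom hh' _ hx)
  have hB_le (h : H) : P (B h (δ * (π {h}).toReal)) ≤ ENNReal.ofReal δ * π {h} := by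
    refine (hBprob h _ (by positivity) (mul_le_one₀ hδ1 ENNReal.toReal_nonneg ?_)).trans_eq ?_
    · exact ENNReal.toReal_le_of_le_ofReal zero_le_one (by simpa using prob_le_one)
    · rw [ENNReal.ofReal_mul hδ0, ENNReal.ofReal_toReal (measure_ne_top π _)]
  calc P {x : 𝒳 | ∃ h : H, x ∈ B h (δ * (π {h}).toReal)}
      ≤ ∑' h : T, P (B h (δ * (π {(h : H)}).toReal)) :=
        (measure_mono hcover).trans (measure_biUnion_le P hT_countable _)
    _ ≤ ∑' h : T, ENNReal.ofReal δ * π {(h : H)} := ENNReal.tsum_le_tsum fun h ↦ hB_le h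
    _ = ENNReal.ofReal δ * ∑' h : T, π {(h : H)} := ENNReal.tsum_mul_left
    _ ≤ ENNReal.ofReal δ := by
        simpa using mul_le_mul_right (hT_sum.trans_eq measure_univ) (ENNReal.ofReal δ)
end

section
/- Let δ ∈ [0,1]. Under Assumption (A), for any prior probability measure π on ℋ and any algorithm taking X as input and returning h_X ∈ ℋ (measurably as a function of X), the probability over X ~ P that X ∈ B(h_X, δ·π({h_X})) is at most δ. -/
/-!
Call two objects measurably inseparable if no measurable set contains one but not the other.
Such objects have the same singleton mass, and by joint measurability of `B` the same bad events,
so the event in question only depends on the class of `h_X`. For representatives `d` of distinct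
classes the measurable hulls of `{d}` are pairwise `π`-a.e. disjoint, hence `∑ π {d} ≤ 1` and only
countably many classes carry mass; the massless ones contribute `B(h, 0) = ∅`. The event is thus
covered by countably many `B(d, δ π {d})`, of total probability at most `∑ δ π {d} ≤ δ`.
-/

open Function MeasureTheory

section MeasurablyInseparable

variable {α : Type*} [MeasurableSpace α] {a b : α}

def MeasurablyInseparable (a b : α) : Prop := ∀ s, MeasurableSet s → (a ∈ s ↔ b ∈ s)

variable (α) in
def measurablyInseparableSetoid : Setoid α where
  r := MeasurablyInseparable
  iseqv :=
    { refl := fun _ _ _ => Iff.rfl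
      symm := fun h s hs => (h s hs).symm
      trans := fun h₁ h₂ s hs => (h₁ s hs).trans (h₂ s hs) }

lemma MeasurablyInseparable.map {β : Type*} [MeasurableSpace β] {f : α → β} (hf : Measurable f)
    (h : MeasurablyInseparable a b) : MeasurablyInseparable (f a) (f b) :=
  fun _ hs => h _ (hf hs)

lemma exists_measurableSet_mem_notMem_of_not_measurablyInseparable
    (h : ¬ MeasurablyInseparable a b) : ∃ s, MeasurableSet s ∧ a ∈ s ∧ b ∉ s := by
  simp only [MeasurablyInseparable, not_forall] at h
  obtain ⟨s, hs, hab⟩ := h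
  by_cases ha : a ∈ s
  · exact ⟨s, hs, ha, fun hb => hab (iff_of_true ha hb)⟩
  · exact ⟨sᶜ, hs.compl, ha, fun hb => hab (iff_of_false ha hb)⟩

lemma MeasurablyInseparable.measure_singleton_le (μ : Measure α)
    (h : MeasurablyInseparable a b) : μ {a} ≤ μ {b} :=
  calc μ {a} ≤ μ (toMeasurable μ {b}) := measure_mono <| Set.singleton_subset_iff.2 <|
        (h _ (measurableSet_toMeasurable μ _)).2 (subset_toMeasurable μ _ rfl)
    _ = μ {b} := measure_toMeasurable _

lemma MeasurablyInseparable.measure_singleton_eq (μ : Measure α)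
    (h : MeasurablyInseparable a b) : μ {a} = μ {b} :=
  (h.measure_singleton_le μ).antisymm
    (MeasurablyInseparable.measure_singleton_le μ fun s hs => (h s hs).symm)

lemma aedisjoint_toMeasurable_singleton_of_not_measurablyInseparable (μ : Measure α) [SFinite μ]
    (h : ¬ MeasurablyInseparable a b) :
    AEDisjoint μ (toMeasurable μ {a}) (toMeasurable μ {b}) := by
  obtain ⟨s, hs, has, hbs⟩ := exists_measurableSet_mem_notMem_of_not_measurablyInseparable h
  have ha : μ (toMeasurable μ {a} ∩ sᶜ) = 0 := by
    rw [Measure.measure_toMeasurable_inter_of_sFinite hs.compl,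
      Set.singleton_inter_eq_empty.2 (not_not.2 has), measure_empty]
  have hb : μ (toMeasurable μ {b} ∩ s) = 0 := by
    rw [Measure.measure_toMeasurable_inter_of_sFinite hs, Set.singleton_inter_eq_empty.2 hbs,
      measure_empty]
  refine measure_mono_null (fun x ⟨hxa, hxb⟩ => ?_) (measure_union_null ha hb)
  by_cases hx : x ∈ s
  exacts [Or.inr ⟨hxb, hx⟩, Or.inl ⟨hxa, hx⟩]

lemma tsum_measure_singleton_out_le (μ : Measure α) [SFinite μ] :
    ∑' q : Quotient (measurablyInseparableSetoid α), μ {q.out} ≤ μ Set.univ := by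
  have hdisj : Pairwise (AEDisjoint μ on fun q : Quotient (measurablyInseparableSetoid α) =>
      toMeasurable μ {q.out}) := fun q q' hqq' =>
    aedisjoint_toMeasurable_singleton_of_not_measurablyInseparable μ fun h =>
      hqq' (Quotient.out_equiv_out.1 h)
  calc ∑' q : Quotient (measurablyInseparableSetoid α), μ {q.out}
      = ∑' q : Quotient (measurablyInseparableSetoid α), μ (toMeasurable μ {q.out}) := by
        simp only [measure_toMeasurable]
    _ ≤ μ (⋃ q : Quotient (measurablyInseparableSetoid α), toMeasurable μ {q.out}) :=
        tsum_meas_le_meas_iUnion_of_disjoint₀ μ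
          (fun _ => (measurableSet_toMeasurable μ _).nullMeasurableSet) hdisj
    _ ≤ μ Set.univ := measure_mono (Set.subset_univ _)

lemma countable_support_measure_singleton_out (μ : Measure α) [IsFiniteMeasure μ] :
    (support fun q : Quotient (measurablyInseparableSetoid α) => μ {q.out}).Countable :=
  Summable.countable_support_ennreal
    ((tsum_measure_singleton_out_le μ).trans_lt (measure_lt_top μ _)).ne

lemma measure_setOf_mem_le_tsum_out {β : Type*} [MeasurableSpace β] (ν : Measure β)
    (μ : Measure α) [IsFiniteMeasure μ] {F : α → Set β}
    (hF : ∀ a b, MeasurablyInseparable a b → F a = F b) (hF0 : ∀ a, μ {a} = 0 → F a = ∅)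
    (g : β → α) :
    ν {x | x ∈ F (g x)} ≤ ∑' q : Quotient (measurablyInseparableSetoid α), ν (F q.out) := by
  set S := support fun q : Quotient (measurablyInseparableSetoid α) => μ {q.out}
  have hcover : {x | x ∈ F (g x)} ⊆ ⋃ q ∈ S, F q.out := by
    intro x (hx : x ∈ F (g x))
    have hrel : MeasurablyInseparable (g x) (Quotient.mk _ (g x)).out :=
      (measurablyInseparableSetoid α).symm (Quotient.mk_out (g x))
    refine Set.mem_biUnion (x := Quotient.mk _ (g x)) (fun h0 => ?_) (hF _ _ hrel ▸ hx)
    rw [hF _ _ hrel, hF0 _ h0] at hx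
    exact hx
  calc ν {x | x ∈ F (g x)} ≤ ∑' q : S, ν (F q.1.out) :=
        (measure_mono hcover).trans
          (measure_biUnion_le ν (countable_support_measure_singleton_out μ) _)
    _ ≤ ∑' q : Quotient (measurablyInseparableSetoid α), ν (F q.out) :=
        ENNReal.tsum_comp_le_tsum_of_injective Subtype.val_injective
          (fun q : Quotient _ => ν (F q.out))

end MeasurablyInseparable

theorem abstract_occam_razor_algorithm_general
    {𝒳 : Type*} [MeasurableSpace 𝒳] {H : Type*} [MeasurableSpace H]
    (P : Measure 𝒳) [IsProbabilityMeasure P]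
    (B : H → ℝ → Set 𝒳)
    (hBprob : ∀ (h : H) (t : ℝ), 0 ≤ t → t ≤ 1 → P (B h t) ≤ ENNReal.ofReal t)
    (hBmeas : MeasurableSet {p : 𝒳 × H × ℝ | p.1 ∈ B p.2.1 p.2.2})
    (hB0 : ∀ h : H, B h 0 = ∅)
    (δ : ℝ) (hδ0 : 0 ≤ δ) (hδ1 : δ ≤ 1)
    (π : Measure H) [IsProbabilityMeasure π]
    (hX : 𝒳 → H) :
    P {x : 𝒳 | x ∈ B (hX x) (δ * (π {hX x}).toReal)} ≤ ENNReal.ofReal δ := by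
  set F : H → Set 𝒳 := fun h => B h (δ * (π {h}).toReal)
  have hF : ∀ a b, MeasurablyInseparable a b → F a = F b := fun a b hab => by
    ext x
    simp only [F, hab.measure_singleton_eq π]
    exact hab.map (f := fun h => (x, h, δ * (π {b}).toReal)) (by fun_prop) _ hBmeas
  have hF0 : ∀ h, π {h} = 0 → F h = ∅ := fun h h0 => by simp [F, h0, hB0]
  have hFprob : ∀ h, P (F h) ≤ ENNReal.ofReal δ * π {h} := fun h => by
    have hmass : (π {h}).toReal ≤ 1 :=
      ENNReal.toReal_le_of_le_ofReal zero_le_one (by simpa using prob_le_one)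
    calc P (F h) ≤ ENNReal.ofReal (δ * (π {h}).toReal) :=
          hBprob _ _ (by positivity) (mul_le_one₀ hδ1 ENNReal.toReal_nonneg hmass)
      _ = ENNReal.ofReal δ * π {h} := by
          rw [ENNReal.ofReal_mul hδ0, ENNReal.ofReal_toReal (measure_ne_top π _)]
  calc P {x | x ∈ F (hX x)} ≤ ∑' q : Quotient (measurablyInseparableSetoid H), P (F q.out) :=
        measure_setOf_mem_le_tsum_out P π hF hF0 hX
    _ ≤ ∑' q : Quotient (measurablyInseparableSetoid H), ENNReal.ofReal δ * π {q.out} :=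
        ENNReal.tsum_le_tsum fun q => hFprob _
    _ ≤ ENNReal.ofReal δ := by
        rw [ENNReal.tsum_mul_left]
        simpa using mul_le_mul_right (tsum_measure_singleton_out_le π) (ENNReal.ofReal δ)

/-- **Abstract Occam's razor** (second part).
Under Assumption (A), for any prior probability measure `π` on the pool `H` and any
measurable algorithm `x ↦ h_x` returning an object of `H`, the probability over `X ~ P`
that `X ∈ B(h_X, δ·π({h_X}))` is at most `δ`. -/
theorem abstract_occam_razor_algorithm
    {𝒳 : Type*} [MeasurableSpace 𝒳] {H : Type*} [MeasurableSpace H]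
    (P : Measure 𝒳) [IsProbabilityMeasure P]
    (B : H → ℝ → Set 𝒳)
    (hBprob : ∀ (h : H) (t : ℝ), 0 ≤ t → t ≤ 1 → P (B h t) ≤ ENNReal.ofReal t)
    (hBmeas : MeasurableSet {p : 𝒳 × H × ℝ | p.1 ∈ B p.2.1 p.2.2})
    (hB0 : ∀ h : H, B h 0 = ∅)
    (δ : ℝ) (hδ0 : 0 ≤ δ) (hδ1 : δ ≤ 1)
    (π : Measure H) [IsProbabilityMeasure π]
    (hX : 𝒳 → H) (hXmeas : Measurable hX) :
    P {x : 𝒳 | x ∈ B (hX x) (δ * (π {hX x}).toReal)} ≤ ENNReal.ofReal δ :=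
  abstract_occam_razor_algorithm_general P B hBprob hBmeas hB0 δ hδ0 hδ1 π hX
end

section
/- Let δ ∈ [0,1]. Pose Assumption (A), let μ be a nonnegative measure on ℋ, let π be a probability density function on ℋ with respect to μ, and let X ↦ A_X ⊆ ℋ be an algorithm with (X,h) ↦ 1{h ∈ A_X} bimeasurable such that μ(A_X) = a almost surely for some constant a ∈ (0,∞). Then with level function Δ(h,s) = min(δ·a·π(h), 1), the expectation over X ~ P of the false prediction rate ρ_Δ(X, A_X) is at most δ. -/
/-!
With `Δ h = min (δ a π h) 1` and `μ (A x) = a` almost surely, the false prediction rate at `x` is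
at most `a⁻¹ μ {h | x ∈ B(h, Δ h)}`. By Tonelli the expectation of the latter measure is
`∫ P (B(h, Δ h)) dμ ≤ ∫ Δ dμ ≤ δ a`. Tonelli needs `μ` to be σ-finite: since `B(h, 0) = ∅` only
the set `{Δ > 0}` matters, and there `μ` is σ-finite by Markov's inequality, `Δ` being integrable.
-/

open MeasureTheory Set
open scoped Classical ENNReal

theorem sigmaFinite_restrict_setOf_pos {α : Type*} [MeasurableSpace α] {μ : Measure α}
    {f : α → ℝ≥0∞} (hf : Measurable f) (hfin : ∫⁻ x, f x ∂μ ≠ ∞) :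
    SigmaFinite (μ.restrict {x | 0 < f x}) := by
  set U := {x | 0 < f x}
  refine Measure.sigmaFinite_of_countable
    (S := insert Uᶜ (range fun n : ℕ ↦ {x | ((n : ℝ≥0∞) + 1)⁻¹ ≤ f x}))
    ((countable_range _).insert _) ?_ ?_
  · rintro s (rfl | ⟨n, rfl⟩)
    · simp [Measure.restrict_apply' (measurableSet_lt measurable_const hf), U]
    · calc μ.restrict U {x | ((n : ℝ≥0∞) + 1)⁻¹ ≤ f x} ≤ μ {x | ((n : ℝ≥0∞) + 1)⁻¹ ≤ f x} :=
            Measure.restrict_apply_le _ _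
        _ ≤ (∫⁻ x, f x ∂μ) / ((n : ℝ≥0∞) + 1)⁻¹ :=
            meas_ge_le_lintegral_div hf.aemeasurable (by simp) (by simp)
        _ < ∞ := ENNReal.div_lt_top hfin (by simp)
  · refine sUnion_eq_univ_iff.2 fun x ↦ ?_
    by_cases hx : f x = 0
    · exact ⟨Uᶜ, mem_insert _ _, by simp [U, hx]⟩
    obtain ⟨n, hn⟩ := ENNReal.exists_inv_nat_lt hx
    refine ⟨_, mem_insert_of_mem _ ⟨n, rfl⟩, ?_⟩
    exact le_trans (ENNReal.inv_le_inv.2 le_self_add) hn.le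

theorem lintegral_measure_setOf_mem_le {𝒳 H : Type*} [MeasurableSpace 𝒳] [MeasurableSpace H]
    {P : Measure 𝒳} [SFinite P] {B : H → ℝ → Set 𝒳}
    (hBprob : ∀ (h : H) (t : ℝ), 0 ≤ t → t ≤ 1 → P (B h t) ≤ ENNReal.ofReal t)
    (hBmeas : MeasurableSet {p : 𝒳 × H × ℝ | p.1 ∈ B p.2.1 p.2.2})
    (hB0 : ∀ h : H, B h 0 = ∅) (μ : Measure H) {Δ : H → ℝ} (hΔ : Measurable Δ)
    (hΔ0 : ∀ h, 0 ≤ Δ h) (hΔ1 : ∀ h, Δ h ≤ 1) :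
    ∫⁻ x, μ {h | x ∈ B h (Δ h)} ∂P ≤ ∫⁻ h, ENNReal.ofReal (Δ h) ∂μ := by
  by_cases hfin : ∫⁻ h, ENNReal.ofReal (Δ h) ∂μ = ∞
  · exact hfin ▸ le_top
  set U := {h | 0 < ENNReal.ofReal (Δ h)}
  have := sigmaFinite_restrict_setOf_pos hΔ.ennreal_ofReal hfin
  set S := {p : 𝒳 × H | p.1 ∈ B p.2 (Δ p.2)}
  have hS : MeasurableSet S :=
    hBmeas.preimage (measurable_fst.prodMk (measurable_snd.prodMk (hΔ.comp measurable_snd)))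
  have hslice (x : 𝒳) : μ {h | x ∈ B h (Δ h)} = μ.restrict U (Prod.mk x ⁻¹' S) := by
    rw [Measure.restrict_apply (hS.preimage measurable_prodMk_left), inter_eq_left.2 fun h hx ↦ ?_]
    · rfl
    by_contra hU
    have hΔh : Δ h = 0 := le_antisymm (by simpa [U] using hU) (hΔ0 h)
    simp [S, hΔh, hB0] at hx
  calc ∫⁻ x, μ {h | x ∈ B h (Δ h)} ∂P = P.prod (μ.restrict U) S := by
        simp_rw [hslice, Measure.prod_apply hS]
    _ = ∫⁻ h, P (B h (Δ h)) ∂μ.restrict U := Measure.prod_apply_symm hS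
    _ ≤ ∫⁻ h, ENNReal.ofReal (Δ h) ∂μ.restrict U :=
        lintegral_mono fun h ↦ hBprob h _ (hΔ0 h) (hΔ1 h)
    _ ≤ ∫⁻ h, ENNReal.ofReal (Δ h) ∂μ := setLIntegral_le_lintegral _ _

theorem occam_hammer_constant_volume_general
    {𝒳 : Type*} [MeasurableSpace 𝒳] {H : Type*} [MeasurableSpace H]
    (P : Measure 𝒳) [IsProbabilityMeasure P]
    (B : H → ℝ → Set 𝒳)
    (hBprob : ∀ (h : H) (t : ℝ), 0 ≤ t → t ≤ 1 → P (B h t) ≤ ENNReal.ofReal t)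
    (hBmeas : MeasurableSet {p : 𝒳 × H × ℝ | p.1 ∈ B p.2.1 p.2.2})
    (hB0 : ∀ h : H, B h 0 = ∅)
    (δ : ℝ) (hδ0 : 0 ≤ δ)
    (μ : Measure H)
    (π : H → ℝ) (hπmeas : Measurable π) (hπnn : ∀ h, 0 ≤ π h)
    (hπdens : ∫⁻ h, ENNReal.ofReal (π h) ∂μ = 1)
    (A : 𝒳 → Set H)
    (a : ℝ) (ha : 0 < a)
    (hconst : ∀ᵐ x ∂P, μ (A x) = ENNReal.ofReal a) :
    ∫⁻ x, (if μ (A x) = 0 ∨ μ (A x) = ⊤ then 0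
        else μ (A x ∩ {h : H | x ∈ B h (min (δ * a * π h) 1)}) / μ (A x)) ∂P
      ≤ ENNReal.ofReal δ := by
  have ha0 : ENNReal.ofReal a ≠ 0 := ENNReal.ofReal_ne_zero_iff.2 ha
  have hlevel : ∫⁻ h, ENNReal.ofReal (min (δ * a * π h) 1) ∂μ ≤ ENNReal.ofReal (δ * a) :=
    calc ∫⁻ h, ENNReal.ofReal (min (δ * a * π h) 1) ∂μ
        ≤ ∫⁻ h, ENNReal.ofReal (δ * a) * ENNReal.ofReal (π h) ∂μ :=
          lintegral_mono fun h ↦ (ENNReal.ofReal_le_ofReal (min_le_left _ _)).trans_eq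
            (ENNReal.ofReal_mul (by positivity))
      _ = ENNReal.ofReal (δ * a) := by
          rw [lintegral_const_mul' _ _ ENNReal.ofReal_ne_top, hπdens, mul_one]
  calc _ ≤ ∫⁻ x, (ENNReal.ofReal a)⁻¹ * μ {h | x ∈ B h (min (δ * a * π h) 1)} ∂P := by
        refine lintegral_mono_ae (hconst.mono fun x hx ↦ ?_)
        rw [hx, if_neg (by simp [ha0]), ENNReal.div_eq_inv_mul]
        gcongr
        exact inter_subset_right
    _ = (ENNReal.ofReal a)⁻¹ * ∫⁻ x, μ {h | x ∈ B h (min (δ * a * π h) 1)} ∂P :=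
        lintegral_const_mul' _ _ (ENNReal.inv_ne_top.2 ha0)
    _ ≤ (ENNReal.ofReal a)⁻¹ * ENNReal.ofReal (δ * a) := by
        gcongr
        exact (lintegral_measure_setOf_mem_le hBprob hBmeas hB0 μ
          (Δ := fun h ↦ min (δ * a * π h) 1) ((measurable_const.mul hπmeas).min measurable_const)
          (fun h ↦ le_min (mul_nonneg (by positivity) (hπnn h)) zero_le_one)
          (fun h ↦ min_le_right _ _)).trans hlevel
    _ = ENNReal.ofReal δ := by
        rw [ENNReal.ofReal_mul hδ0, mul_left_comm, ENNReal.inv_mul_cancel ha0 ENNReal.ofReal_ne_top,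
          mul_one]

/-- **Occam's hammer, constant output volume case.**
Under Assumption (A), if `μ` is a volume measure on the pool `H`, `π` a probability
density w.r.t. `μ`, and `x ↦ A x` an algorithm (bimeasurable) returning a set of constant
volume `μ (A x) = a ∈ (0,∞)` a.s., then with level function `Δ(h,s) = min(δ·a·π(h), 1)`
the expected false prediction rate
`ρ_Δ(x, A x) = μ(A x ∩ {h | x ∈ B(h, Δ(h, |A x|))}) / μ(A x)` (set to `0` when
`μ (A x)` is `0` or `∞`) is at most `δ`. -/
theorem occam_hammer_constant_volume
    {𝒳 : Type*} [MeasurableSpace 𝒳] {H : Type*} [MeasurableSpace H]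
    (P : Measure 𝒳) [IsProbabilityMeasure P]
    (B : H → ℝ → Set 𝒳)
    (hBprob : ∀ (h : H) (t : ℝ), 0 ≤ t → t ≤ 1 → P (B h t) ≤ ENNReal.ofReal t)
    (hBmeas : MeasurableSet {p : 𝒳 × H × ℝ | p.1 ∈ B p.2.1 p.2.2})
    (hB0 : ∀ h : H, B h 0 = ∅)
    (δ : ℝ) (hδ0 : 0 ≤ δ) (hδ1 : δ ≤ 1)
    (μ : Measure H)
    (π : H → ℝ) (hπmeas : Measurable π) (hπnn : ∀ h, 0 ≤ π h)
    (hπdens : ∫⁻ h, ENNReal.ofReal (π h) ∂μ = 1)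
    (A : 𝒳 → Set H) (hAmeas : MeasurableSet {p : 𝒳 × H | p.2 ∈ A p.1})
    (a : ℝ) (ha : 0 < a)
    (hconst : ∀ᵐ x ∂P, μ (A x) = ENNReal.ofReal a) :
    ∫⁻ x, (if μ (A x) = 0 ∨ μ (A x) = ⊤ then 0
        else μ (A x ∩ {h : H | x ∈ B h (min (δ * a * π h) 1)}) / μ (A x)) ∂P
      ≤ ENNReal.ofReal δ :=
  occam_hammer_constant_volume_general P B hBprob hBmeas hB0 δ hδ0 μ π hπmeas hπnn hπdens A a ha
    hconst
end

section
/- Let δ ∈ [0,1]. Pose Assumption (A), let μ be a nonnegative measure on ℋ, let π be a probability density function on ℋ with respect to μ, let a ∈ (0,∞), and let X ↦ A_X ⊆ ℋ be an algorithm with (X,h) ↦ 1{h ∈ A_X} bimeasurable such that μ(A_X) ≥ a almost surely. Then with level function Δ(h,s) = min(δ·a·π(h), 1), the expectation over X ~ P of the false prediction rate ρ_Δ(X, A_X) is at most δ. -/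
/-!
The false prediction rate of `A x` is at most `μ(S_x) / a`, where
`S_x = {h | x ∈ B(h, Δ h)}`. By Tonelli, `∫ μ(S_x) dP = ∫ P(B(h, Δ h)) dμ(h) ≤ ∫ δ a π dμ = δ a`.
Tonelli applies although `μ` is arbitrary: every `S_x` lies in `{π > 0}` because `B(h, 0) = ∅`,
and `μ` is s-finite there since `π` is integrable.
-/

open MeasureTheory
open scoped Classical ENNReal

namespace MeasureTheory

variable {α : Type*} [MeasurableSpace α]

theorem Measure.sFinite_restrict_ne_zero_of_lintegral_ne_top {μ : Measure α} {f : α → ℝ≥0∞}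
    (hf : Measurable f) (hf_int : ∫⁻ x, f x ∂μ ≠ ∞) :
    SFinite (μ.restrict {x | f x ≠ 0}) := by
  set s := {x | f x ≠ 0}
  -- `μ.restrict s` is recovered from the finite measure `(μ.restrict s).withDensity f`
  have : IsFiniteMeasure ((μ.restrict s).withDensity f) := by
    refine ⟨?_⟩
    rw [withDensity_apply _ MeasurableSet.univ, Measure.restrict_univ]
    exact (setLIntegral_le_lintegral s f).trans_lt hf_int.lt_top
  have hf_ne_zero : ∀ᵐ x ∂μ.restrict s, f x ≠ 0 :=
    (ae_restrict_mem (hf (measurableSet_singleton 0).compl)).mono fun _ hx => hx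
  have hf_ne_top : ∀ᵐ x ∂μ.restrict s, f x ≠ ∞ :=
    ae_restrict_of_ae (ae_lt_top hf hf_int) |>.mono fun _ hx => hx.ne
  rw [← withDensity_inv_same hf hf_ne_zero hf_ne_top]
  infer_instance

variable {β : Type*} [MeasurableSpace β]

theorem lintegral_measure_prodMk_left_eq_of_subset {P : Measure α} [SFinite P] {μ : Measure β}
    {s : Set β} [SFinite (μ.restrict s)] {S : Set (α × β)} (hS : MeasurableSet S)
    (hSs : ∀ x, Prod.mk x ⁻¹' S ⊆ s) :
    ∫⁻ x, μ (Prod.mk x ⁻¹' S) ∂P = ∫⁻ y, P ((·, y) ⁻¹' S) ∂μ.restrict s := by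
  simp_rw [← Measure.restrict_eq_self μ (hSs _)]
  rw [← Measure.prod_apply hS, Measure.prod_apply_symm hS]

theorem ite_measure_inter_div_le {μ : Measure β} {A T : Set β} {c : ℝ≥0∞} (hc : c ≤ μ A) :
    (if μ A = 0 ∨ μ A = ⊤ then 0 else μ (A ∩ T) / μ A) ≤ μ T / c := by
  split_ifs
  · exact zero_le
  · exact ENNReal.div_le_div (measure_mono Set.inter_subset_right) hc

end MeasureTheory

theorem occam_hammer_lower_bounded_volume_general
    {𝒳 : Type*} [MeasurableSpace 𝒳] {H : Type*} [MeasurableSpace H]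
    (P : Measure 𝒳) [IsProbabilityMeasure P]
    (B : H → ℝ → Set 𝒳)
    (hBprob : ∀ (h : H) (t : ℝ), 0 ≤ t → t ≤ 1 → P (B h t) ≤ ENNReal.ofReal t)
    (hBmeas : MeasurableSet {p : 𝒳 × H × ℝ | p.1 ∈ B p.2.1 p.2.2})
    (hB0 : ∀ h : H, B h 0 = ∅)
    (δ : ℝ) (hδ0 : 0 ≤ δ)
    (μ : Measure H)
    (π : H → ℝ) (hπmeas : Measurable π) (hπnn : ∀ h, 0 ≤ π h)
    (hπdens : ∫⁻ h, ENNReal.ofReal (π h) ∂μ = 1)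
    (A : 𝒳 → Set H)
    (a : ℝ) (ha : 0 < a)
    (hconst : ∀ᵐ x ∂P, ENNReal.ofReal a ≤ μ (A x)) :
    ∫⁻ x, (if μ (A x) = 0 ∨ μ (A x) = ⊤ then 0
        else μ (A x ∩ {h : H | x ∈ B h (min (δ * a * π h) 1)}) / μ (A x)) ∂P
      ≤ ENNReal.ofReal δ := by
  set Δ : H → ℝ := fun h => min (δ * a * π h) 1
  set S : Set (𝒳 × H) := {p | p.1 ∈ B p.2 (Δ p.2)}
  have hS : MeasurableSet S :=
    (measurable_fst.prodMk (measurable_snd.prodMk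
      (((measurable_const.mul hπmeas).min measurable_const).comp measurable_snd))) hBmeas
  have hSπ : ∀ x, Prod.mk x ⁻¹' S ⊆ {h | ENNReal.ofReal (π h) ≠ 0} := by
    intro x h hx hπ
    have hπ0 : π h = 0 := le_antisymm (ENNReal.ofReal_eq_zero.1 hπ) (hπnn h)
    simp [S, Δ, hπ0, hB0] at hx
  have := Measure.sFinite_restrict_ne_zero_of_lintegral_ne_top hπmeas.ennreal_ofReal
    (hπdens ▸ ENNReal.one_ne_top)
  have hPB : ∀ h, P ((·, h) ⁻¹' S) ≤ ENNReal.ofReal (δ * a) * ENNReal.ofReal (π h) := fun h =>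
    calc P (B h (Δ h)) ≤ ENNReal.ofReal (Δ h) :=
          hBprob h _ (le_min (by have := hπnn h; positivity) zero_le_one) (min_le_right _ _)
      _ ≤ ENNReal.ofReal (δ * a * π h) := ENNReal.ofReal_le_ofReal (min_le_left _ _)
      _ = _ := ENNReal.ofReal_mul (by positivity)
  have hES : ∫⁻ x, μ (Prod.mk x ⁻¹' S) ∂P ≤ ENNReal.ofReal δ * ENNReal.ofReal a :=
    calc ∫⁻ x, μ (Prod.mk x ⁻¹' S) ∂P
        = ∫⁻ h, P ((·, h) ⁻¹' S) ∂μ.restrict {h | ENNReal.ofReal (π h) ≠ 0} :=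
          lintegral_measure_prodMk_left_eq_of_subset hS hSπ
      _ ≤ ∫⁻ h, ENNReal.ofReal (δ * a) * ENNReal.ofReal (π h) ∂μ :=
          (lintegral_mono hPB).trans (setLIntegral_le_lintegral _ _)
      _ = ENNReal.ofReal δ * ENNReal.ofReal a := by
          rw [lintegral_const_mul _ hπmeas.ennreal_ofReal, hπdens, mul_one,
            ENNReal.ofReal_mul hδ0]
  calc _ ≤ ∫⁻ x, μ (Prod.mk x ⁻¹' S) * (ENNReal.ofReal a)⁻¹ ∂P :=
        lintegral_mono_ae (hconst.mono fun x hx => ite_measure_inter_div_le hx)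
    _ = (∫⁻ x, μ (Prod.mk x ⁻¹' S) ∂P) / ENNReal.ofReal a :=
        lintegral_mul_const' _ _ (ENNReal.inv_ne_top.2 (ENNReal.ofReal_pos.2 ha).ne')
    _ ≤ ENNReal.ofReal δ := ENNReal.div_le_of_le_mul hES

/-- **Occam's hammer, constant output volume case.**
Under Assumption (A), if `μ` is a volume measure on the pool `H`, `π` a probability
density w.r.t. `μ`, and `x ↦ A x` an algorithm (bimeasurable) returning a set of
volume `μ (A x) ≥ a` a.s., for a constant `a ∈ (0,∞)`, then with level function `Δ(h,s) = min(δ·a·π(h), 1)`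
the expected false prediction rate
`ρ_Δ(x, A x) = μ(A x ∩ {h | x ∈ B(h, Δ(h, |A x|))}) / μ(A x)` (set to `0` when
`μ (A x)` is `0` or `∞`) is at most `δ`. -/
theorem occam_hammer_lower_bounded_volume
    {𝒳 : Type*} [MeasurableSpace 𝒳] {H : Type*} [MeasurableSpace H]
    (P : Measure 𝒳) [IsProbabilityMeasure P]
    (B : H → ℝ → Set 𝒳)
    (hBprob : ∀ (h : H) (t : ℝ), 0 ≤ t → t ≤ 1 → P (B h t) ≤ ENNReal.ofReal t)
    (hBmeas : MeasurableSet {p : 𝒳 × H × ℝ | p.1 ∈ B p.2.1 p.2.2})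
    (hB0 : ∀ h : H, B h 0 = ∅)
    (δ : ℝ) (hδ0 : 0 ≤ δ) (hδ1 : δ ≤ 1)
    (μ : Measure H)
    (π : H → ℝ) (hπmeas : Measurable π) (hπnn : ∀ h, 0 ≤ π h)
    (hπdens : ∫⁻ h, ENNReal.ofReal (π h) ∂μ = 1)
    (A : 𝒳 → Set H) (hAmeas : MeasurableSet {p : 𝒳 × H | p.2 ∈ A p.1})
    (a : ℝ) (ha : 0 < a)
    (hconst : ∀ᵐ x ∂P, ENNReal.ofReal a ≤ μ (A x)) :
    ∫⁻ x, (if μ (A x) = 0 ∨ μ (A x) = ⊤ then 0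
        else μ (A x ∩ {h : H | x ∈ B h (min (δ * a * π h) 1)}) / μ (A x)) ∂P
      ≤ ENNReal.ofReal δ :=
  occam_hammer_lower_bounded_volume_general P B hBprob hBmeas hB0 δ hδ0 μ π hπmeas hπnn hπdens A a
    ha hconst
end

section
/- (Occam's hammer.) Let δ ∈ [0,1]. Pose Assumption (A'). Let μ be a nonnegative reference measure on ℋ, π a probability density function with respect to μ, and γ a probability distribution on (0,∞). Put β(x) = ∫_{(0,x]} u dγ(u) for x ∈ (0,∞), and define the level function Δ(h,θ) = min(δ·π(h)·β(θ⁻¹), 1). Then for any algorithm X ↦ θ_X returning a probability density θ_X on ℋ with respect to μ such that (X,h) ↦ θ_X(h) is bimeasurable, one has ∫_𝒳 ∫_ℋ 1{X ∈ B(h, Δ(h, θ_X(h)))} θ_X(h) dμ(h) dP(X) ≤ δ; that is, the probability over X ~ P and h drawn from the distribution θ_X·μ that X ∈ B(h, Δ(h, θ_X(h))) is at most δ. -/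
/-!
Layer cake: on `(0, ∞)` the level `Δ(h, ·)` decreases and `B(h, ·)` increases, so
`θ · 1{X ∈ B(h, Δ(h, θ))} ≤ ∫_0^∞ 1{X ∈ B(h, Δ(h, t))} dt`. By Tonelli the `X`-integral comes
first and gives `P(B(h, Δ(h, t))) ≤ δ π(h) β(1/t)`, while
`∫_0^∞ β(1/t) dt = ∫ u · u⁻¹ dγ(u) ≤ 1`, leaving `δ ∫ π dμ = δ`. Tonelli in `h` needs
σ-finiteness: `μ` is σ-finite on a set off which `π = 0`, and there `Δ = 0`, so the bad events
are empty.
-/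

open MeasureTheory Set
open scoped ENNReal

section LayerCake

variable {𝒳 H T : Type*}

theorem ofReal_le_setLIntegral_Ioi_indicator {F : ℝ → Set 𝒳} (hF : AntitoneOn F (Ioi 0))
    {a : ℝ} {x : 𝒳} (hx : x ∈ F a) :
    ENNReal.ofReal a ≤ ∫⁻ t in Ioi 0, (F t).indicator 1 x := by
  rcases le_or_gt a 0 with ha | ha
  · simp [ENNReal.ofReal_of_nonpos ha]
  calc ENNReal.ofReal a = volume (Ioo 0 a) := by rw [Real.volume_Ioo, sub_zero]
    _ = ∫⁻ t in Ioo 0 a, (F t).indicator 1 x := by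
        rw [← setLIntegral_one]
        refine setLIntegral_congr_fun measurableSet_Ioo fun t ht => ?_
        rw [indicator_of_mem (hF ht.1 ha ht.2.le hx), Pi.one_apply]
    _ ≤ ∫⁻ t in Ioi 0, (F t).indicator 1 x := lintegral_mono_set Ioo_subset_Ioi_self

variable [MeasurableSpace 𝒳] [MeasurableSpace H] [MeasurableSpace T]

theorem lintegral_lintegral_lintegral_indicator {F : H → T → Set 𝒳}
    (hF : MeasurableSet {p : 𝒳 × H × T | p.1 ∈ F p.2.1 p.2.2})
    (P : Measure 𝒳) [SFinite P] (μ : Measure H) [SFinite μ] (ν : Measure T) [SFinite ν] :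
    ∫⁻ x, ∫⁻ h, ∫⁻ t, (F h t).indicator 1 x ∂ν ∂μ ∂P = ∫⁻ h, ∫⁻ t, P (F h t) ∂ν ∂μ := by
  set E := {p : 𝒳 × H × T | p.1 ∈ F p.2.1 p.2.2}
  have hE : Measurable (E.indicator (1 : 𝒳 × H × T → ℝ≥0∞)) := measurable_one.indicator hF
  calc ∫⁻ x, ∫⁻ h, ∫⁻ t, (F h t).indicator 1 x ∂ν ∂μ ∂P
      = ∫⁻ h, ∫⁻ x, ∫⁻ t, E.indicator 1 (x, h, t) ∂ν ∂P ∂μ :=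
      lintegral_lintegral_swap (Measurable.lintegral_prod_right'
        (hE.comp (measurable_fst.fst.prodMk
          (measurable_fst.snd.prodMk measurable_snd)))).aemeasurable
    _ = ∫⁻ h, ∫⁻ t, ∫⁻ x, E.indicator 1 (x, h, t) ∂P ∂ν ∂μ :=
      lintegral_congr fun h => lintegral_lintegral_swap (hE.comp
        (measurable_fst.prodMk (measurable_const.prodMk measurable_snd))).aemeasurable
    _ = ∫⁻ h, ∫⁻ t, P (F h t) ∂ν ∂μ :=
      lintegral_congr fun h => lintegral_congr fun t =>
        lintegral_indicator_one (hF.preimage measurable_prodMk_right)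

theorem lintegral_lintegral_indicator_le_of_antitoneOn (P : Measure 𝒳) [SFinite P]
    {μ : Measure H} {S : Set H} [SigmaFinite (μ.restrict S)] {F : H → ℝ → Set 𝒳}
    (hF_meas : MeasurableSet {p : 𝒳 × H × ℝ | p.1 ∈ F p.2.1 p.2.2})
    (hF_anti : ∀ h, AntitoneOn (F h) (Ioi 0)) (hF_empty : ∀ h ∉ S, ∀ t, F h t = ∅)
    (θ : 𝒳 → H → ℝ) :
    ∫⁻ x, ∫⁻ h, {h | x ∈ F h (θ x h)}.indicator (fun h => ENNReal.ofReal (θ x h)) h ∂μ ∂P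
      ≤ ∫⁻ h, (∫⁻ t in Ioi 0, P (F h t)) ∂μ := by
  calc ∫⁻ x, ∫⁻ h, {h | x ∈ F h (θ x h)}.indicator (fun h => ENNReal.ofReal (θ x h)) h ∂μ ∂P
      = ∫⁻ x, ∫⁻ h in S,
          {h | x ∈ F h (θ x h)}.indicator (fun h => ENNReal.ofReal (θ x h)) h ∂μ ∂P :=
        lintegral_congr fun x => (setLIntegral_eq_of_support_subset fun h hsupp =>
          by_contra fun hh => hsupp (indicator_of_notMem (by simp [hF_empty h hh]) _)).symm
    _ ≤ ∫⁻ x, ∫⁻ h in S, (∫⁻ t in Ioi 0, (F h t).indicator 1 x) ∂μ ∂P := by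
        refine lintegral_mono fun x => lintegral_mono fun h => ?_
        classical
        rw [indicator_apply]
        split_ifs with hx
        · exact ofReal_le_setLIntegral_Ioi_indicator (hF_anti h) hx
        · exact zero_le
    _ = ∫⁻ h in S, (∫⁻ t in Ioi 0, P (F h t)) ∂μ :=
        lintegral_lintegral_lintegral_indicator hF_meas P _ _
    _ ≤ ∫⁻ h, (∫⁻ t in Ioi 0, P (F h t)) ∂μ := setLIntegral_le_lintegral _ _

end LayerCake

section PartialFirstMoment

/-- The paper's `β`. -/
noncomputable def partialFirstMoment (γ : Measure ℝ) (s : ℝ) : ℝ := ∫ u in Ioc 0 s, u ∂γ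

variable (γ : Measure ℝ)

theorem partialFirstMoment_nonneg (s : ℝ) : 0 ≤ partialFirstMoment γ s :=
  setIntegral_nonneg measurableSet_Ioc fun _ hu => hu.1.le

theorem integrableOn_id_Ioc [IsFiniteMeasure γ] (s : ℝ) :
    IntegrableOn (fun u : ℝ => u) (Ioc 0 s) γ :=
  Measure.integrableOn_of_bounded (M := s) (measure_ne_top γ _)
    measurable_id.aestronglyMeasurable <| ae_restrict_of_forall_mem measurableSet_Ioc
      fun _ hu => by rw [Real.norm_eq_abs, abs_of_pos hu.1]; exact hu.2

theorem monotone_partialFirstMoment [IsFiniteMeasure γ] : Monotone (partialFirstMoment γ) :=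
  fun _ b hab => setIntegral_mono_set (integrableOn_id_Ioc γ b)
    (ae_restrict_of_forall_mem measurableSet_Ioc fun _ hu => hu.1.le)
    (Ioc_subset_Ioc_right hab).eventuallyLE

theorem ofReal_partialFirstMoment [IsFiniteMeasure γ] (s : ℝ) :
    ENNReal.ofReal (partialFirstMoment γ s) = ∫⁻ u in Ioc 0 s, ENNReal.ofReal u ∂γ :=
  ofReal_integral_eq_lintegral_ofReal (integrableOn_id_Ioc γ s)
    (ae_restrict_of_forall_mem measurableSet_Ioc fun _ hu => hu.1.le)

theorem setLIntegral_Ioi_indicator_Ioc_inv {u : ℝ} (hu : 0 < u) :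
    ∫⁻ t in Ioi 0, (Ioc 0 t⁻¹).indicator ENNReal.ofReal u = 1 := by
  have hswap : ∀ t ∈ Ioi (0 : ℝ),
      (Ioc 0 t⁻¹).indicator ENNReal.ofReal u
        = (Ioc 0 u⁻¹).indicator (fun _ => ENNReal.ofReal u) t :=
    fun t ht => by simp [indicator_apply, hu, mem_Ioi.1 ht, le_inv_comm₀ hu (mem_Ioi.1 ht)]
  rw [setLIntegral_congr_fun measurableSet_Ioi hswap, lintegral_indicator_const measurableSet_Ioc,
    Measure.restrict_apply measurableSet_Ioc, inter_eq_left.2 Ioc_subset_Ioi_self, Real.volume_Ioc,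
    sub_zero, ← ENNReal.ofReal_mul hu.le, mul_inv_cancel₀ hu.ne', ENNReal.ofReal_one]

theorem lintegral_Ioi_lintegral_Ioc_inv [SFinite γ] :
    ∫⁻ t in Ioi 0, ∫⁻ u in Ioc 0 t⁻¹, ENNReal.ofReal u ∂γ = γ (Ioi 0) := by
  have hmeas : Measurable fun p : ℝ × ℝ => (Ioc 0 p.1⁻¹).indicator ENNReal.ofReal p.2 :=
    Measurable.indicator (s := {p : ℝ × ℝ | p.2 ∈ Ioc 0 p.1⁻¹}) measurable_snd.ennreal_ofReal
      ((measurableSet_lt measurable_const measurable_snd).inter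
        (measurableSet_le measurable_snd measurable_fst.inv))
  calc ∫⁻ t in Ioi 0, ∫⁻ u in Ioc 0 t⁻¹, ENNReal.ofReal u ∂γ
      = ∫⁻ t in Ioi 0, ∫⁻ u, (Ioc 0 t⁻¹).indicator ENNReal.ofReal u ∂γ := by
        simp_rw [lintegral_indicator measurableSet_Ioc]
    _ = ∫⁻ u, (∫⁻ t in Ioi 0, (Ioc 0 t⁻¹).indicator ENNReal.ofReal u) ∂γ :=
        lintegral_lintegral_swap hmeas.aemeasurable
    _ = ∫⁻ u, (Ioi 0).indicator 1 u ∂γ := by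
        refine lintegral_congr fun u => ?_
        rcases le_or_gt u 0 with hu | hu
        · simp [indicator_of_notMem, not_lt.2 hu]
        · rw [indicator_of_mem (mem_Ioi.2 hu), Pi.one_apply,
            setLIntegral_Ioi_indicator_Ioc_inv hu]
    _ = γ (Ioi 0) := lintegral_indicator_one measurableSet_Ioi

theorem setLIntegral_Ioi_ofReal_partialFirstMoment_inv [IsFiniteMeasure γ] :
    ∫⁻ t in Ioi 0, ENNReal.ofReal (partialFirstMoment γ t⁻¹) = γ (Ioi 0) := by
  simp_rw [ofReal_partialFirstMoment]
  exact lintegral_Ioi_lintegral_Ioc_inv γ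

end PartialFirstMoment

section OccamLevel

variable {H : Type*}

/-- The paper's level function `Δ`. -/
noncomputable def occamLevel (δ : ℝ) (π : H → ℝ) (γ : Measure ℝ) (h : H) (t : ℝ) : ℝ :=
  min (δ * π h * partialFirstMoment γ t⁻¹) 1

variable (δ : ℝ) (π : H → ℝ) (γ : Measure ℝ)

theorem measurable_occamLevel [MeasurableSpace H] [IsFiniteMeasure γ] (hπ : Measurable π) :
    Measurable (Function.uncurry (occamLevel δ π γ)) :=
  ((measurable_const.mul (hπ.comp measurable_fst)).mul
    ((monotone_partialFirstMoment γ).measurable.comp measurable_snd.inv)).min measurable_const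

theorem occamLevel_of_eq_zero {h : H} (hπ : π h = 0) (t : ℝ) : occamLevel δ π γ h t = 0 := by
  simp [occamLevel, hπ]

variable {δ π} {h : H}

theorem occamLevel_nonneg (hδ : 0 ≤ δ) (hπ : 0 ≤ π h) (t : ℝ) : 0 ≤ occamLevel δ π γ h t :=
  le_min (by have := partialFirstMoment_nonneg γ t⁻¹; positivity) zero_le_one

theorem antitoneOn_occamLevel [IsFiniteMeasure γ] (hδ : 0 ≤ δ) (hπ : 0 ≤ π h) :
    AntitoneOn (occamLevel δ π γ h) (Ioi 0) :=
  fun _ hs _ _ hst => min_le_min_right 1 <| mul_le_mul_of_nonneg_left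
    (monotone_partialFirstMoment γ (inv_anti₀ hs hst)) (mul_nonneg hδ hπ)

theorem ofReal_occamLevel_le (hδ : 0 ≤ δ) (hπ : 0 ≤ π h) (t : ℝ) :
    ENNReal.ofReal (occamLevel δ π γ h t)
      ≤ ENNReal.ofReal δ * ENNReal.ofReal (π h) * ENNReal.ofReal (partialFirstMoment γ t⁻¹) := by
  rw [← ENNReal.ofReal_mul hδ, ← ENNReal.ofReal_mul (mul_nonneg hδ hπ)]
  exact ENNReal.ofReal_le_ofReal (min_le_left _ _)

theorem lintegral_setLIntegral_Ioi_ofReal_occamLevel_le [MeasurableSpace H]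
    [IsProbabilityMeasure γ] (μ : Measure H) (hδ : 0 ≤ δ) (hπ_meas : Measurable π)
    (hπ : ∀ h, 0 ≤ π h) :
    ∫⁻ h, (∫⁻ t in Ioi 0, ENNReal.ofReal (occamLevel δ π γ h t)) ∂μ
      ≤ ENNReal.ofReal δ * ∫⁻ h, ENNReal.ofReal (π h) ∂μ := by
  calc ∫⁻ h, (∫⁻ t in Ioi 0, ENNReal.ofReal (occamLevel δ π γ h t)) ∂μ
      ≤ ∫⁻ h, (∫⁻ t in Ioi 0, ENNReal.ofReal δ * ENNReal.ofReal (π h) *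
          ENNReal.ofReal (partialFirstMoment γ t⁻¹)) ∂μ := by
        gcongr with h t
        exact ofReal_occamLevel_le γ hδ (hπ h) t
    _ = ∫⁻ h, ENNReal.ofReal δ * ENNReal.ofReal (π h) * γ (Ioi 0) ∂μ := by
        refine lintegral_congr fun h => ?_
        rw [lintegral_const_mul' _ _ (by finiteness),
          setLIntegral_Ioi_ofReal_partialFirstMoment_inv]
    _ ≤ ∫⁻ h, ENNReal.ofReal δ * ENNReal.ofReal (π h) ∂μ :=
        lintegral_mono fun h => mul_le_of_le_one_right' prob_le_one
    _ = ENNReal.ofReal δ * ∫⁻ h, ENNReal.ofReal (π h) ∂μ :=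
        lintegral_const_mul _ hπ_meas.ennreal_ofReal

end OccamLevel

theorem exists_sigmaFinite_restrict_of_lintegral_ofReal_ne_top {H : Type*} [MeasurableSpace H]
    {μ : Measure H} {f : H → ℝ} (hf : Measurable f) (hf_nonneg : ∀ h, 0 ≤ f h)
    (hf_fin : ∫⁻ h, ENNReal.ofReal (f h) ∂μ ≠ ∞) :
    ∃ S, MeasurableSet S ∧ (∀ h ∉ S, f h = 0) ∧ SigmaFinite (μ.restrict S) :=
  have hf_int : Integrable f μ :=
    ⟨hf.aestronglyMeasurable,
      (hasFiniteIntegral_iff_ofReal (ae_of_all _ hf_nonneg)).2 hf_fin.lt_top⟩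
  ((memLp_one_iff_integrable.2 hf_int).finStronglyMeasurable_of_stronglyMeasurable
    hf.stronglyMeasurable one_ne_zero ENNReal.one_ne_top).exists_set_sigmaFinite

theorem occam_hammer_general
    {𝒳 : Type*} [MeasurableSpace 𝒳] {H : Type*} [MeasurableSpace H]
    (P : Measure 𝒳) [IsProbabilityMeasure P]
    (B : H → ℝ → Set 𝒳)
    (hBprob : ∀ (h : H) (t : ℝ), 0 ≤ t → t ≤ 1 → P (B h t) ≤ ENNReal.ofReal t)
    (hBmeas : MeasurableSet {p : 𝒳 × H × ℝ | p.1 ∈ B p.2.1 p.2.2})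
    (hB0 : ∀ h : H, B h 0 = ∅)
    (hBmono : ∀ (h : H) (t t' : ℝ), t ≤ t' → B h t ⊆ B h t')
    (δ : ℝ) (hδ0 : 0 ≤ δ)
    (μ : Measure H)
    (π : H → ℝ) (hπmeas : Measurable π) (hπnn : ∀ h, 0 ≤ π h)
    (hπdens : ∫⁻ h, ENNReal.ofReal (π h) ∂μ = 1)
    (γ : Measure ℝ) [IsProbabilityMeasure γ]
    (θ : 𝒳 → H → ℝ) :
    ∫⁻ x, ∫⁻ h,
        Set.indicator
          {h' : H | x ∈ B h' (min (δ * π h' * ∫ u in Set.Ioc 0 (θ x h')⁻¹, u ∂γ) 1)}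
          (fun h' => ENNReal.ofReal (θ x h')) h ∂μ ∂P
      ≤ ENNReal.ofReal δ := by
  set F : H → ℝ → Set 𝒳 := fun h t => B h (occamLevel δ π γ h t)
  obtain ⟨S, -, hπS, _⟩ := exists_sigmaFinite_restrict_of_lintegral_ofReal_ne_top hπmeas hπnn
    (hπdens ▸ ENNReal.one_ne_top)
  have hF_meas : MeasurableSet {p : 𝒳 × H × ℝ | p.1 ∈ F p.2.1 p.2.2} :=
    hBmeas.preimage (measurable_fst.prodMk
      (measurable_snd.fst.prodMk ((measurable_occamLevel δ π γ hπmeas).comp measurable_snd)))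
  have hF_anti (h : H) : AntitoneOn (F h) (Ioi 0) :=
    Monotone.comp_antitoneOn (hBmono h) (antitoneOn_occamLevel γ hδ0 (hπnn h))
  have hF_empty (h : H) (hh : h ∉ S) (t : ℝ) : F h t = ∅ := by
    simp only [F, occamLevel_of_eq_zero δ π γ (hπS h hh), hB0]
  calc ∫⁻ x, ∫⁻ h, {h | x ∈ F h (θ x h)}.indicator (fun h => ENNReal.ofReal (θ x h)) h ∂μ ∂P
      ≤ ∫⁻ h, (∫⁻ t in Ioi 0, P (F h t)) ∂μ :=
        lintegral_lintegral_indicator_le_of_antitoneOn P hF_meas hF_anti hF_empty θ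
    _ ≤ ∫⁻ h, (∫⁻ t in Ioi 0, ENNReal.ofReal (occamLevel δ π γ h t)) ∂μ := by
        gcongr with h t
        exact hBprob h _ (occamLevel_nonneg γ hδ0 (hπnn h) t) (min_le_right _ _)
    _ ≤ ENNReal.ofReal δ := by
        simpa [hπdens] using lintegral_setLIntegral_Ioi_ofReal_occamLevel_le γ μ hδ0 hπmeas hπnn

/-- **Occam's hammer** (main theorem).
Pose Assumption (A'): bad events `B h t` with `P(B h t) ≤ t` for `t ∈ [0,1]`, jointly
measurable, `B h 0 = ∅`, nondecreasing in the level `t`. Let `μ` be a reference measure on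
the pool `H`, `π` a probability density (complexity prior) w.r.t. `μ`, and `γ` a probability
distribution on `(0,∞)` (inverse density prior); put `β(x) = ∫_(0,x] u dγ(u)` and
`Δ(h,θ) = min(δ·π(h)·β(θ⁻¹), 1)`. Then for any algorithm `x ↦ θ x` returning a probability
density `θ x` over `H` w.r.t. `μ` (bimeasurably), the probability over `X ~ P` and
`h ~ θ_X·μ` that `X ∈ B(h, Δ(h, θ_X(h)))` is at most `δ`. -/
theorem occam_hammer
    {𝒳 : Type*} [MeasurableSpace 𝒳] {H : Type*} [MeasurableSpace H]
    (P : Measure 𝒳) [IsProbabilityMeasure P]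
    (B : H → ℝ → Set 𝒳)
    (hBprob : ∀ (h : H) (t : ℝ), 0 ≤ t → t ≤ 1 → P (B h t) ≤ ENNReal.ofReal t)
    (hBmeas : MeasurableSet {p : 𝒳 × H × ℝ | p.1 ∈ B p.2.1 p.2.2})
    (hB0 : ∀ h : H, B h 0 = ∅)
    (hBmono : ∀ (h : H) (t t' : ℝ), t ≤ t' → B h t ⊆ B h t')
    (δ : ℝ) (hδ0 : 0 ≤ δ) (hδ1 : δ ≤ 1)
    (μ : Measure H)
    (π : H → ℝ) (hπmeas : Measurable π) (hπnn : ∀ h, 0 ≤ π h)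
    (hπdens : ∫⁻ h, ENNReal.ofReal (π h) ∂μ = 1)
    (γ : Measure ℝ) [IsProbabilityMeasure γ] (hγ : γ (Set.Iic 0) = 0)
    (θ : 𝒳 → H → ℝ) (hθmeas : Measurable (Function.uncurry θ))
    (hθnn : ∀ x h, 0 ≤ θ x h)
    (hθdens : ∀ x, ∫⁻ h, ENNReal.ofReal (θ x h) ∂μ = 1) :
    ∫⁻ x, ∫⁻ h,
        Set.indicator
          {h' : H | x ∈ B h' (min (δ * π h' * ∫ u in Set.Ioc 0 (θ x h')⁻¹, u ∂γ) 1)}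
          (fun h' => ENNReal.ofReal (θ x h')) h ∂μ ∂P
      ≤ ENNReal.ofReal δ :=
  occam_hammer_general P B hBprob hBmeas hB0 hBmono δ hδ0 μ π hπmeas hπnn hπdens γ θ
end

section
/- Let δ ∈ [0,1]. Pose Assumption (A'). Let μ be a nonnegative reference measure on ℋ, π a probability density function with respect to μ, and γ a probability distribution on (0,∞); put β(x) = ∫_{(0,x]} u dγ(u). Then for any algorithm X ↦ A_X ⊆ ℋ with (X,h) ↦ 1{h ∈ A_X} bimeasurable, with level function Δ(h,s) = min(δ·π(h)·β(s), 1) the expectation over X ~ P of the false prediction rate ρ_Δ(X, A_X) is at most δ. -/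
open MeasureTheory
open scoped Classical ENNReal

/-!
Write `s = |A_x|`. If `x ∈ B(h, Δ(h, s))`, then `x ∈ B(h, Δ(h, 1/r))` for every `r ∈ (0, 1/s]`,
because `Δ(h, ·)` is nondecreasing; so `1/s` is at most the Lebesgue measure `hitVolume x h` of
`{r > 0 | x ∈ B(h, Δ(h, 1/r))}`, and by Markov's inequality in `h` the false prediction rate is at
most `∫ hitVolume x h dμ(h)`. Taking the expectation in `x` first, `P(B(h, Δ(h, 1/r))) ≤ Δ(h, 1/r)`
gives at most `∫_h ∫_{r>0} δ π(h) β(1/r) dr dμ(h)`, and by Tonelli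
`∫_{r>0} β(1/r) dr = ∫ u · u⁻¹ dγ(u) = γ(0, ∞) ≤ 1`. Exchanging the integrals in `x` and `h` needs
σ-finiteness, which `μ` has on `{π > 0}`, and `Δ(h, ·)` vanishes off that set.
-/

open Set Function

namespace OccamHammer

section TruncMean

variable (γ : Measure ℝ)

noncomputable def truncMean (s : ℝ) : ℝ := ∫ u in Ioc 0 s, u ∂γ

theorem truncMean_nonneg (s : ℝ) : 0 ≤ truncMean γ s :=
  setIntegral_nonneg measurableSet_Ioc fun _ hu => hu.1.le

variable [IsFiniteMeasure γ]

theorem ofReal_truncMean (s : ℝ) :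
    ENNReal.ofReal (truncMean γ s) = ∫⁻ u in Ioc 0 s, ENNReal.ofReal u ∂γ :=
  ofReal_integral_eq_lintegral_ofReal
    (continuous_id.integrableOn_Icc.mono_set Ioc_subset_Icc_self)
    ((ae_restrict_iff' measurableSet_Ioc).2 (ae_of_all _ fun _ hu => hu.1.le))

theorem truncMean_mono : Monotone (truncMean γ) := fun s t hst => by
  rw [← ENNReal.ofReal_le_ofReal_iff (truncMean_nonneg γ t), ofReal_truncMean, ofReal_truncMean]
  exact lintegral_mono_set (Ioc_subset_Ioc_right hst)

theorem lintegral_ofReal_truncMean_inv :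
    ∫⁻ r in Ioi 0, ENNReal.ofReal (truncMean γ r⁻¹) = γ (Ioi 0) := by
  have hinner : ∀ u, ∫⁻ r in Ioi 0, (Ioc 0 r⁻¹).indicator ENNReal.ofReal u =
      (Ioi 0).indicator 1 u := by
    intro u
    rcases le_or_gt u 0 with hu | hu
    · simp [indicator_of_notMem (fun h : u ∈ Ioc 0 _ => hu.not_gt h.1),
        indicator_of_notMem (fun h : u ∈ Ioi 0 => hu.not_gt h)]
    have hswap : EqOn (fun r => (Ioc 0 r⁻¹).indicator ENNReal.ofReal u)
        ((Ioc 0 u⁻¹).indicator fun _ => ENNReal.ofReal u) (Ioi 0) := by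
      intro r hr
      simp only [indicator_apply, mem_Ioc, hu, hr.out, true_and, le_inv_comm₀ hu hr]
    rw [setLIntegral_congr_fun measurableSet_Ioi hswap, lintegral_indicator_const measurableSet_Ioc,
      Measure.restrict_eq_self _ Ioc_subset_Ioi_self, Real.volume_Ioc, sub_zero,
      ← ENNReal.ofReal_mul hu.le, mul_inv_cancel₀ hu.ne', indicator_of_mem (mem_Ioi.2 hu)]
    simp
  have hmeas : Measurable (uncurry fun r u => (Ioc (0 : ℝ) r⁻¹).indicator ENNReal.ofReal u) := by
    refine Measurable.ite ?_ (ENNReal.measurable_ofReal.comp measurable_snd) measurable_const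
    exact (measurableSet_lt measurable_const measurable_snd).inter
      (measurableSet_le measurable_snd measurable_fst.inv)
  simp_rw [ofReal_truncMean, ← lintegral_indicator measurableSet_Ioc]
  rw [lintegral_lintegral_swap hmeas.aemeasurable]
  simp_rw [hinner]
  exact lintegral_indicator_one measurableSet_Ioi

end TruncMean

theorem sigmaFinite_restrict_pos_of_lintegral_ne_top {α : Type*} [MeasurableSpace α]
    {μ : Measure α} {f : α → ℝ≥0∞} (hf : Measurable f) (hint : ∫⁻ a, f a ∂μ ≠ ∞) :
    SigmaFinite (μ.restrict {a | 0 < f a}) := by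
  let S : ℕ → Set α := fun n => {a | 0 < f a → ((n : ℝ≥0∞) + 1)⁻¹ ≤ f a}
  have hfinite : ∀ n, μ.restrict {a | 0 < f a} (S n) < ∞ := by
    intro n
    have hc : ((n : ℝ≥0∞) + 1)⁻¹ ≠ 0 := by simp
    calc μ.restrict {a | 0 < f a} (S n) = μ (S n ∩ {a | 0 < f a}) :=
          Measure.restrict_apply' (measurableSet_lt measurable_const hf)
      _ ≤ μ {a | ((n : ℝ≥0∞) + 1)⁻¹ ≤ f a} := measure_mono fun a ha => ha.1 ha.2
      _ ≤ (∫⁻ a, f a ∂μ) / ((n : ℝ≥0∞) + 1)⁻¹ := meas_ge_le_lintegral_div hf.aemeasurable hc (by simp)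
      _ < ∞ := ENNReal.div_lt_top hint hc
  have hspan : ⋃ n, S n = univ := by
    refine eq_univ_of_forall fun a => mem_iUnion.2 ?_
    by_cases ha : f a = 0
    · exact ⟨0, fun h => absurd ha h.ne'⟩
    obtain ⟨n, hn⟩ := ENNReal.exists_inv_nat_lt ha
    exact ⟨n, fun _ => (ENNReal.inv_le_inv.2 le_self_add).trans hn.le⟩
  exact ⟨⟨⟨S, fun _ => trivial, hfinite, hspan⟩⟩⟩

section Hit

variable {𝒳 H : Type*} {B : H → ℝ → Set 𝒳} {Δ : H → ℝ → ℝ}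

noncomputable def hitVolume (B : H → ℝ → Set 𝒳) (Δ : H → ℝ → ℝ) (x : 𝒳) (h : H) : ℝ≥0∞ :=
  volume.restrict (Ioi 0) {r : ℝ | x ∈ B h (Δ h r⁻¹)}

theorem ofReal_inv_le_hitVolume (hBmono : ∀ (h : H) (t t' : ℝ), t ≤ t' → B h t ⊆ B h t')
    (hΔmono : ∀ h, Monotone (Δ h)) {x : 𝒳} {h : H} {t : ℝ} (ht : 0 < t)
    (hx : x ∈ B h (Δ h t)) : ENNReal.ofReal t⁻¹ ≤ hitVolume B Δ x h :=
  calc ENNReal.ofReal t⁻¹ = volume.restrict (Ioi 0) (Ioc 0 t⁻¹) := by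
        rw [Measure.restrict_eq_self _ Ioc_subset_Ioi_self, Real.volume_Ioc, sub_zero]
    _ ≤ hitVolume B Δ x h := measure_mono fun r hr =>
        hBmono h _ _ (hΔmono h ((le_inv_comm₀ hr.1 ht).1 hr.2)) hx

variable [MeasurableSpace 𝒳] [MeasurableSpace H]
  (hBmeas : MeasurableSet {p : 𝒳 × H × ℝ | p.1 ∈ B p.2.1 p.2.2})
  (hΔ : Measurable (uncurry Δ))
include hBmeas hΔ

theorem measurableSet_hit :
    MeasurableSet {p : (𝒳 × H) × ℝ | p.1.1 ∈ B p.1.2 (Δ p.1.2 p.2⁻¹)} :=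
  hBmeas.preimage <| measurable_fst.fst.prodMk <| measurable_fst.snd.prodMk <|
    hΔ.comp <| measurable_fst.snd.prodMk measurable_snd.inv

theorem measurable_hitVolume : Measurable (uncurry (hitVolume B Δ)) :=
  measurable_measure_prodMk_left (measurableSet_hit hBmeas hΔ)

theorem lintegral_hitVolume_le (P : Measure 𝒳) [SFinite P]
    (hBprob : ∀ (h : H) (t : ℝ), 0 ≤ t → t ≤ 1 → P (B h t) ≤ ENNReal.ofReal t)
    (hΔ01 : ∀ h s, Δ h s ∈ Icc 0 1) (h : H) :
    ∫⁻ x, hitVolume B Δ x h ∂P ≤ ∫⁻ r in Ioi 0, ENNReal.ofReal (Δ h r⁻¹) := by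
  have hs : MeasurableSet {p : 𝒳 × ℝ | p.1 ∈ B h (Δ h p.2⁻¹)} :=
    (measurableSet_hit hBmeas hΔ).preimage <|
      (measurable_fst.prodMk measurable_const).prodMk measurable_snd
  calc ∫⁻ x, hitVolume B Δ x h ∂P = (P.prod (volume.restrict (Ioi 0))) _ :=
        (Measure.prod_apply hs).symm
    _ = ∫⁻ r in Ioi 0, P (B h (Δ h r⁻¹)) := Measure.prod_apply_symm hs
    _ ≤ _ := lintegral_mono fun r => hBprob h _ (hΔ01 h _).1 (hΔ01 h _).2

theorem lintegral_lintegral_hitVolume_le (P : Measure 𝒳) [SFinite P] (ν : Measure H) [SFinite ν]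
    (hBprob : ∀ (h : H) (t : ℝ), 0 ≤ t → t ≤ 1 → P (B h t) ≤ ENNReal.ofReal t)
    (hΔ01 : ∀ h s, Δ h s ∈ Icc 0 1) :
    ∫⁻ x, ∫⁻ h, hitVolume B Δ x h ∂ν ∂P ≤ ∫⁻ h, (∫⁻ r in Ioi 0, ENNReal.ofReal (Δ h r⁻¹)) ∂ν := by
  rw [lintegral_lintegral_swap (measurable_hitVolume hBmeas hΔ).aemeasurable]
  exact lintegral_mono fun h => lintegral_hitVolume_le hBmeas hΔ P hBprob hΔ01 h

theorem measure_div_le_lintegral_hitVolume (ν : Measure H)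
    (hBmono : ∀ (h : H) (t t' : ℝ), t ≤ t' → B h t ⊆ B h t') (hΔmono : ∀ h, Monotone (Δ h))
    {S : Set H} {x : 𝒳} {m : ℝ≥0∞} (hm0 : m ≠ 0) (hm : m ≠ ∞)
    (hS : ∀ h ∈ S, x ∈ B h (Δ h m.toReal)) :
    ν S / m ≤ ∫⁻ h, hitVolume B Δ x h ∂ν := by
  have ht : 0 < m.toReal := ENNReal.toReal_pos hm0 hm
  calc ν S / m = ENNReal.ofReal m.toReal⁻¹ * ν S := by
        rw [ENNReal.ofReal_inv_of_pos ht, ENNReal.ofReal_toReal hm, div_eq_mul_inv, mul_comm]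
    _ ≤ ENNReal.ofReal m.toReal⁻¹ * ν {h | ENNReal.ofReal m.toReal⁻¹ ≤ hitVolume B Δ x h} := by
        gcongr
        exact fun h hh => ofReal_inv_le_hitVolume hBmono hΔmono ht (hS h hh)
    _ ≤ _ := mul_meas_ge_le_lintegral (measurable_hitVolume hBmeas hΔ).of_uncurry_left _

end Hit

section Level

variable {H : Type*} (δ : ℝ) (π : H → ℝ) (γ : Measure ℝ)

noncomputable def setLevel (h : H) (s : ℝ) : ℝ := min (δ * π h * truncMean γ s) 1

variable {δ π}

theorem setLevel_mem_Icc (hδ : 0 ≤ δ) (hπ : ∀ h, 0 ≤ π h) (h : H) (s : ℝ) :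
    setLevel δ π γ h s ∈ Icc 0 1 :=
  ⟨le_min (mul_nonneg (mul_nonneg hδ (hπ h)) (truncMean_nonneg γ s)) zero_le_one,
    min_le_right _ _⟩

theorem pos_of_mem_setLevel {𝒳 : Type*} {B : H → ℝ → Set 𝒳} (hB0 : ∀ h, B h 0 = ∅)
    (hπ : ∀ h, 0 ≤ π h) {x : 𝒳} {h : H} {s : ℝ} (hx : x ∈ B h (setLevel δ π γ h s)) :
    0 < π h := by
  refine (hπ h).lt_of_ne fun hπ0 => ?_
  simp [setLevel, ← hπ0, hB0] at hx

variable [IsFiniteMeasure γ]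

theorem setLevel_mono (hδ : 0 ≤ δ) (hπ : ∀ h, 0 ≤ π h) (h : H) : Monotone (setLevel δ π γ h) :=
  fun _ _ hst => min_le_min_right 1 <|
    mul_le_mul_of_nonneg_left (truncMean_mono γ hst) (mul_nonneg hδ (hπ h))

theorem measurable_setLevel [MeasurableSpace H] (hπ : Measurable π) :
    Measurable (uncurry (setLevel δ π γ)) :=
  ((measurable_const.mul (hπ.comp measurable_fst)).mul
    ((truncMean_mono γ).measurable.comp measurable_snd)).min measurable_const

theorem lintegral_setLevel_inv_le [IsProbabilityMeasure γ] (h : H) :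
    ∫⁻ r in Ioi 0, ENNReal.ofReal (setLevel δ π γ h r⁻¹) ≤ ENNReal.ofReal (δ * π h) :=
  calc ∫⁻ r in Ioi 0, ENNReal.ofReal (setLevel δ π γ h r⁻¹)
      ≤ ∫⁻ r in Ioi 0, ENNReal.ofReal (δ * π h) * ENNReal.ofReal (truncMean γ r⁻¹) :=
        lintegral_mono fun r => (ENNReal.ofReal_le_ofReal (min_le_left _ _)).trans_eq
          (ENNReal.ofReal_mul' (truncMean_nonneg γ _))
    _ = ENNReal.ofReal (δ * π h) * γ (Ioi 0) := by
        rw [lintegral_const_mul' _ _ ENNReal.ofReal_ne_top, lintegral_ofReal_truncMean_inv]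
    _ ≤ ENNReal.ofReal (δ * π h) := mul_le_of_le_one_right' prob_le_one

end Level

end OccamHammer

open OccamHammer Set in
theorem occam_hammer_set_output_general
    {𝒳 : Type*} [MeasurableSpace 𝒳] {H : Type*} [MeasurableSpace H]
    (P : Measure 𝒳) [IsProbabilityMeasure P]
    (B : H → ℝ → Set 𝒳)
    (hBprob : ∀ (h : H) (t : ℝ), 0 ≤ t → t ≤ 1 → P (B h t) ≤ ENNReal.ofReal t)
    (hBmeas : MeasurableSet {p : 𝒳 × H × ℝ | p.1 ∈ B p.2.1 p.2.2})
    (hB0 : ∀ h : H, B h 0 = ∅)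
    (hBmono : ∀ (h : H) (t t' : ℝ), t ≤ t' → B h t ⊆ B h t')
    (δ : ℝ) (hδ0 : 0 ≤ δ)
    (μ : Measure H)
    (π : H → ℝ) (hπmeas : Measurable π) (hπnn : ∀ h, 0 ≤ π h)
    (hπdens : ∫⁻ h, ENNReal.ofReal (π h) ∂μ = 1)
    (γ : Measure ℝ) [IsProbabilityMeasure γ]
    (A : 𝒳 → Set H) :
    ∫⁻ x, (if μ (A x) = 0 ∨ μ (A x) = ⊤ then 0
        else μ (A x ∩ {h : H | x ∈ B h
            (min (δ * π h * ∫ u in Set.Ioc 0 ((μ (A x)).toReal), u ∂γ) 1)}) / μ (A x)) ∂P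
      ≤ ENNReal.ofReal δ := by
  set ν := μ.restrict {h | 0 < ENNReal.ofReal (π h)}
  have : SigmaFinite ν := sigmaFinite_restrict_pos_of_lintegral_ne_top
    (ENNReal.measurable_ofReal.comp hπmeas) (hπdens ▸ ENNReal.one_ne_top)
  have hΔ := measurable_setLevel γ hπmeas (δ := δ)
  have hΔmono := setLevel_mono γ hδ0 hπnn
  have hrate : ∀ x, (if μ (A x) = 0 ∨ μ (A x) = ⊤ then 0 else
      μ (A x ∩ {h | x ∈ B h (setLevel δ π γ h (μ (A x)).toReal)}) / μ (A x)) ≤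
      ∫⁻ h, hitVolume B (setLevel δ π γ) x h ∂ν := by
    intro x
    split_ifs with hA
    · exact zero_le
    rw [not_or] at hA
    have hpos : A x ∩ {h | x ∈ B h (setLevel δ π γ h (μ (A x)).toReal)} ⊆
        {h | 0 < ENNReal.ofReal (π h)} := fun h hh =>
      ENNReal.ofReal_pos.2 (pos_of_mem_setLevel γ hB0 hπnn hh.2)
    rw [← Measure.restrict_eq_self μ hpos]
    exact measure_div_le_lintegral_hitVolume hBmeas hΔ ν hBmono hΔmono hA.1 hA.2 fun h hh => hh.2
  calc _ ≤ ∫⁻ x, ∫⁻ h, hitVolume B (setLevel δ π γ) x h ∂ν ∂P := lintegral_mono hrate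
    _ ≤ ∫⁻ h, (∫⁻ r in Ioi 0, ENNReal.ofReal (setLevel δ π γ h r⁻¹)) ∂ν :=
        lintegral_lintegral_hitVolume_le hBmeas hΔ P ν hBprob (setLevel_mem_Icc γ hδ0 hπnn)
    _ ≤ ∫⁻ h, ENNReal.ofReal δ * ENNReal.ofReal (π h) ∂μ := lintegral_mono' Measure.restrict_le_self
        fun h => (lintegral_setLevel_inv_le γ h).trans_eq (ENNReal.ofReal_mul hδ0)
    _ = ENNReal.ofReal δ := by rw [lintegral_const_mul' _ _ ENNReal.ofReal_ne_top, hπdens, mul_one]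

/-- **Occam's hammer for set outputs.**
Pose Assumption (A') (bad events `B h t` with `P(B h t) ≤ t` for `t ∈ [0,1]`, jointly
measurable, `B h 0 = ∅`, nondecreasing in the level). Let `μ` be a reference measure on
the pool `H`, `π` a probability density w.r.t. `μ`, `γ` a probability distribution on
`(0,∞)`, and `β(s) = ∫_(0,s] u dγ(u)`. Then for any algorithm `x ↦ A x` returning a
(bimeasurable) subset of `H`, with level function `Δ(h,s) = min(δ·π(h)·β(s), 1)` the
expected false prediction rate
`ρ_Δ(x, A x) = μ(A x ∩ {h | x ∈ B(h, Δ(h, |A x|))}) / μ(A x)` (set to `0` when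
`μ (A x)` is `0` or `∞`) is at most `δ`. -/
theorem occam_hammer_set_output
    {𝒳 : Type*} [MeasurableSpace 𝒳] {H : Type*} [MeasurableSpace H]
    (P : Measure 𝒳) [IsProbabilityMeasure P]
    (B : H → ℝ → Set 𝒳)
    (hBprob : ∀ (h : H) (t : ℝ), 0 ≤ t → t ≤ 1 → P (B h t) ≤ ENNReal.ofReal t)
    (hBmeas : MeasurableSet {p : 𝒳 × H × ℝ | p.1 ∈ B p.2.1 p.2.2})
    (hB0 : ∀ h : H, B h 0 = ∅)
    (hBmono : ∀ (h : H) (t t' : ℝ), t ≤ t' → B h t ⊆ B h t')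
    (δ : ℝ) (hδ0 : 0 ≤ δ) (hδ1 : δ ≤ 1)
    (μ : Measure H)
    (π : H → ℝ) (hπmeas : Measurable π) (hπnn : ∀ h, 0 ≤ π h)
    (hπdens : ∫⁻ h, ENNReal.ofReal (π h) ∂μ = 1)
    (γ : Measure ℝ) [IsProbabilityMeasure γ] (hγ : γ (Set.Iic 0) = 0)
    (A : 𝒳 → Set H) (hAmeas : MeasurableSet {p : 𝒳 × H | p.2 ∈ A p.1}) :
    ∫⁻ x, (if μ (A x) = 0 ∨ μ (A x) = ⊤ then 0
        else μ (A x ∩ {h : H | x ∈ B h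
            (min (δ * π h * ∫ u in Set.Ioc 0 ((μ (A x)).toReal), u ∂γ) 1)}) / μ (A x)) ∂P
      ≤ ENNReal.ofReal δ :=
  occam_hammer_set_output_general P B hBprob hBmeas hB0 hBmono δ hδ0 μ π hπmeas hπnn hπdens γ A
end

section
/- Let ℋ be a finite set of null hypotheses and α ∈ [0,1]. Let T be an increasing family of tests, and let ℋ₀ ⊆ ℋ be the set of hypotheses true under the data distribution P, so that for every h ∈ ℋ₀ and every level a ∈ [0,1], P(T(X,h,a)=1) ≤ a. Let π be a probability distribution on ℋ, γ a probability distribution on {1,…,|ℋ|}, and β(k) = Σ_{i≤k} i·γ(i). Define the step-up procedure A_X = the largest set G ⊆ ℋ such that for all h ∈ G, T(X, h, min(α·π(h)·β(|G|),1)) = 1. Then the false discovery rate of this procedure satisfies FDR(A) = E_{X~P}[ |A_X ∩ ℋ₀| / |A_X| ] ≤ π(ℋ₀)·α ≤ α (with the convention that the ratio is 0 when A_X = ∅), regardless of the dependence structure of the test statistics. -/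
/-!
The false discovery proportion of a set `G` splits as `∑_{h ∈ H0} 1{h ∈ G} / |G|`. Writing
`1/m = ∑_{k=m}^{n} w_k` with `w_k = 1/k - 1/(k+1)` for `k < n` and `w_n = 1/n`, self-consistency
of `A_X` and monotonicity of `T` place the event `{h ∈ A_X, |A_X| ≤ k}` inside the rejection of
`h` at level `α π(h) β(k)`. Hence the contribution of a true null `h` is at most
`α π(h) ∑_k w_k β(k)`, and Abel summation gives `∑_k w_k β(k) = ∑_i γ(i) = 1`.
-/

open MeasureTheory Finset
open scoped ENNReal

noncomputable def stepWeight (n k : ℕ) : ℝ :=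
  if k = n then (n : ℝ)⁻¹ else (k : ℝ)⁻¹ - ((k : ℝ) + 1)⁻¹

lemma stepWeight_nonneg {n k : ℕ} (hk : k ≠ 0) : 0 ≤ stepWeight n k := by
  unfold stepWeight
  split_ifs
  · positivity
  · have hk' : (0 : ℝ) < k := by positivity
    exact sub_nonneg.2 (inv_anti₀ hk' (by linarith))

lemma sum_Icc_stepWeight {j n : ℕ} (hjn : j ≤ n) :
    ∑ k ∈ Icc j n, stepWeight n k = (j : ℝ)⁻¹ := by
  have hIco : ∑ k ∈ Ico j n, stepWeight n k = -((n : ℝ)⁻¹ - (j : ℝ)⁻¹) := by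
    rw [← sum_Ico_sub (f := fun k : ℕ => (k : ℝ)⁻¹) hjn, ← sum_neg_distrib]
    refine sum_congr rfl fun k hk => ?_
    rw [stepWeight, if_neg (mem_Ico.1 hk).2.ne]
    push_cast
    ring
  rw [← Ico_insert_right hjn, sum_insert right_notMem_Ico, hIco, stepWeight, if_pos rfl]
  ring

lemma ENNReal.inv_natCast_eq_sum_stepWeight {m n : ℕ} (hm : m ≠ 0) (hmn : m ≤ n) :
    (m : ℝ≥0∞)⁻¹ = ∑ k ∈ Icc m n, ENNReal.ofReal (stepWeight n k) := by
  rw [← ENNReal.ofReal_sum_of_nonneg fun k hk =>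
      stepWeight_nonneg (by have := (mem_Icc.1 hk).1; omega),
    sum_Icc_stepWeight hmn, ENNReal.ofReal_inv_of_pos (by positivity), ENNReal.ofReal_natCast]

noncomputable def shapeFunction (γ : ℕ → ℝ) (k : ℕ) : ℝ :=
  ∑ i ∈ Icc 1 k, (i : ℝ) * γ i

lemma shapeFunction_nonneg {γ : ℕ → ℝ} (hγ : ∀ i, 0 ≤ γ i) (k : ℕ) : 0 ≤ shapeFunction γ k :=
  sum_nonneg fun i _ => mul_nonneg i.cast_nonneg (hγ i)

lemma shapeFunction_mono {γ : ℕ → ℝ} (hγ : ∀ i, 0 ≤ γ i) : Monotone (shapeFunction γ) :=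
  fun _ _ hkl => sum_le_sum_of_subset_of_nonneg (Icc_subset_Icc_right hkl)
    fun i _ _ => mul_nonneg i.cast_nonneg (hγ i)

lemma sum_stepWeight_mul_shapeFunction (γ : ℕ → ℝ) (n : ℕ) :
    ∑ k ∈ Icc 1 n, stepWeight n k * shapeFunction γ k = ∑ i ∈ Icc 1 n, γ i := by
  simp only [shapeFunction, mul_sum]
  rw [sum_comm' (t' := Icc 1 n) (s' := fun i => Icc i n) (by intro k i; simp only [mem_Icc]; omega)]
  refine sum_congr rfl fun i hi => ?_
  have hi0 : (i : ℝ) ≠ 0 := by have := (mem_Icc.1 hi).1; positivity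
  rw [← sum_mul, sum_Icc_stepWeight (mem_Icc.1 hi).2]
  field_simp

section FalseDiscoveryProportion

variable {𝒳 H : Type*}

lemma inv_natCast_le_sum_stepWeight_indicator {m n : ℕ} (hm : m ≠ 0) (hmn : m ≤ n)
    (s : ℕ → Set 𝒳) {x : 𝒳} (hx : ∀ k, m ≤ k → x ∈ s k) :
    (m : ℝ≥0∞)⁻¹ ≤ ∑ k ∈ Icc 1 n, (s k).indicator (fun _ => ENNReal.ofReal (stepWeight n k)) x := by
  rw [ENNReal.inv_natCast_eq_sum_stepWeight hm hmn]
  calc ∑ k ∈ Icc m n, ENNReal.ofReal (stepWeight n k)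
      = ∑ k ∈ Icc m n, (s k).indicator (fun _ => ENNReal.ofReal (stepWeight n k)) x :=
        sum_congr rfl fun k hk => by rw [Set.indicator_of_mem (hx k (mem_Icc.1 hk).1)]
    _ ≤ _ := sum_le_sum_of_subset (Icc_subset_Icc_left (Nat.one_le_iff_ne_zero.2 hm))

lemma ite_card_div_card_eq_sum [DecidableEq H] (G H0 : Finset H) :
    (if G.card = 0 then 0 else ((G ∩ H0).card : ℝ≥0∞) / G.card)
      = ∑ h ∈ H0, if h ∈ G then (G.card : ℝ≥0∞)⁻¹ else 0 := by
  split_ifs with hG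
  · simp [card_eq_zero.1 hG]
  · rw [sum_ite_mem, sum_const, nsmul_eq_mul, inter_comm, div_eq_mul_inv]

lemma fdp_le_sum_stepWeight_indicator [DecidableEq H] (G H0 : Finset H) {n : ℕ}
    (hGn : G.card ≤ n) (R : H → ℕ → Set 𝒳) {x : 𝒳}
    (hR : ∀ h ∈ G, ∀ k, G.card ≤ k → x ∈ R h k) :
    (if G.card = 0 then 0 else ((G ∩ H0).card : ℝ≥0∞) / G.card)
      ≤ ∑ h ∈ H0, ∑ k ∈ Icc 1 n, (R h k).indicator (fun _ => ENNReal.ofReal (stepWeight n k)) x := by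
  rw [ite_card_div_card_eq_sum]
  refine sum_le_sum fun h _ => ?_
  split_ifs with hG
  · exact inv_natCast_le_sum_stepWeight_indicator (card_ne_zero_of_mem hG) hGn _ (hR h hG)
  · exact zero_le

lemma sum_stepWeight_mul_measure_le [MeasurableSpace 𝒳] (μ : Measure 𝒳) {γ : ℕ → ℝ}
    (hγ : ∀ i, 0 ≤ γ i) {c : ℝ} (hc : 0 ≤ c) (n : ℕ) (s : ℕ → Set 𝒳)
    (hs : ∀ k ∈ Icc 1 n, μ (s k) ≤ ENNReal.ofReal (c * shapeFunction γ k)) :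
    ∑ k ∈ Icc 1 n, ENNReal.ofReal (stepWeight n k) * μ (s k)
      ≤ ENNReal.ofReal (c * ∑ i ∈ Icc 1 n, γ i) := by
  have hw : ∀ k ∈ Icc 1 n, 0 ≤ stepWeight n k := fun k hk =>
    stepWeight_nonneg (by have := (mem_Icc.1 hk).1; omega)
  calc ∑ k ∈ Icc 1 n, ENNReal.ofReal (stepWeight n k) * μ (s k)
      ≤ ∑ k ∈ Icc 1 n, ENNReal.ofReal (stepWeight n k) * ENNReal.ofReal (c * shapeFunction γ k) :=
        sum_le_sum fun k hk => by gcongr; exact hs k hk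
    _ = ENNReal.ofReal (∑ k ∈ Icc 1 n, stepWeight n k * (c * shapeFunction γ k)) := by
        rw [ENNReal.ofReal_sum_of_nonneg fun k hk =>
          mul_nonneg (hw k hk) (mul_nonneg hc (shapeFunction_nonneg hγ k))]
        exact sum_congr rfl fun k hk => (ENNReal.ofReal_mul (hw k hk)).symm
    _ = ENNReal.ofReal (c * ∑ i ∈ Icc 1 n, γ i) := by
        rw [← sum_stepWeight_mul_shapeFunction γ n, mul_sum]
        congr 1
        exact sum_congr rfl fun k _ => mul_left_comm _ _ _

end FalseDiscoveryProportion

theorem stepup_procedure_FDR_control_general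
    {𝒳 : Type*} [MeasurableSpace 𝒳] {H : Type*} [Fintype H] [DecidableEq H]
    (P : Measure 𝒳) [IsProbabilityMeasure P]
    (α : ℝ) (hα0 : 0 ≤ α)
    (T : 𝒳 → H → ℝ → Bool)
    (hTmeas : ∀ (h : H) (a : ℝ), MeasurableSet {x : 𝒳 | T x h a = true})
    (hTmono : ∀ (x : 𝒳) (h : H) (a a' : ℝ), a ≤ a' → T x h a = true → T x h a' = true)
    (H0 : Finset H)
    (hlevel : ∀ h ∈ H0, ∀ a : ℝ, 0 ≤ a → a ≤ 1 →
      P {x : 𝒳 | T x h a = true} ≤ ENNReal.ofReal a)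
    (π : H → ℝ) (hπnn : ∀ h, 0 ≤ π h) (hπsum : ∑ h, π h = 1)
    (γ : ℕ → ℝ) (hγnn : ∀ i, 0 ≤ γ i)
    (hγsum : ∑ i ∈ Finset.Icc 1 (Fintype.card H), γ i = 1)
    (A : 𝒳 → Finset H)
    (hAself : ∀ x, ∀ h ∈ A x,
      T x h (min (α * π h * ∑ i ∈ Finset.Icc 1 (A x).card, (i : ℝ) * γ i) 1) = true) :
    (∫⁻ x, (if (A x).card = 0 then 0
        else ((A x ∩ H0).card : ℝ≥0∞) / ((A x).card : ℝ≥0∞)) ∂P)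
        ≤ ENNReal.ofReal ((∑ h ∈ H0, π h) * α)
    ∧ ENNReal.ofReal ((∑ h ∈ H0, π h) * α) ≤ ENNReal.ofReal α := by
  set n := Fintype.card H
  let R : H → ℕ → Set 𝒳 := fun h k => {x | T x h (min (α * π h * shapeFunction γ k) 1) = true}
  have hcoef : ∀ h, 0 ≤ α * π h := fun h => mul_nonneg hα0 (hπnn h)
  have hA : ∀ x, ∀ h ∈ A x, ∀ k, (A x).card ≤ k → x ∈ R h k := fun x h hh k hk =>
    hTmono x h _ _ (min_le_min_right 1 (mul_le_mul_of_nonneg_left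
      (shapeFunction_mono hγnn hk) (hcoef h))) (hAself x h hh)
  have hR : ∀ h ∈ H0, ∀ k, P (R h k) ≤ ENNReal.ofReal (α * π h * shapeFunction γ k) := fun h hh k =>
    (hlevel h hh _ (le_min (mul_nonneg (hcoef h) (shapeFunction_nonneg hγnn k)) zero_le_one)
      (min_le_right _ _)).trans (ENNReal.ofReal_le_ofReal (min_le_left _ _))
  have hπH0 : ∑ h ∈ H0, π h ≤ 1 := hπsum ▸ sum_le_univ_sum_of_nonneg hπnn
  refine ⟨?_, ENNReal.ofReal_le_ofReal (mul_le_of_le_one_left hα0 hπH0)⟩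
  calc _ ≤ ∫⁻ x, ∑ h ∈ H0, ∑ k ∈ Icc 1 n,
          (R h k).indicator (fun _ => ENNReal.ofReal (stepWeight n k)) x ∂P :=
        lintegral_mono fun x => fdp_le_sum_stepWeight_indicator _ _ (card_le_univ _) R (hA x)
    _ = ∑ h ∈ H0, ∑ k ∈ Icc 1 n, ENNReal.ofReal (stepWeight n k) * P (R h k) := by
        rw [lintegral_finsetSum _ fun h _ => Finset.measurable_sum _ fun k _ =>
          measurable_const.indicator (hTmeas h _)]
        refine sum_congr rfl fun h _ => ?_
        rw [lintegral_finsetSum _ fun k _ => measurable_const.indicator (hTmeas h _)]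
        exact sum_congr rfl fun k _ => lintegral_indicator_const (hTmeas h _) _
    _ ≤ ∑ h ∈ H0, ENNReal.ofReal (α * π h * ∑ i ∈ Icc 1 n, γ i) := sum_le_sum fun h hh =>
        sum_stepWeight_mul_measure_le P hγnn (hcoef h) n _ fun k _ => hR h hh k
    _ = ENNReal.ofReal ((∑ h ∈ H0, π h) * α) := by
        rw [hγsum, ← ENNReal.ofReal_sum_of_nonneg fun h _ => by simpa using hcoef h, sum_mul]
        simp only [mul_one, mul_comm]

/-- **The Occam's-hammer family of step-up multiple testing procedures has
distribution-free FDR control** (Proposition 5 of the paper).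
`H` is a finite pool of null hypotheses, `T x h a ∈ {0,1}` an increasing family of tests
(`true` = "rejected"), and `H0` the set of true nulls, so that each individual test has
level `a`: `P(T(X,h,a) = 1) ≤ a` for `h ∈ H0`, `a ∈ [0,1]`. Given a prior `π` on `H`, a
prior `γ` on `{1,…,|H|}` and `β(k) = Σ_{i ≤ k} i·γ(i)`, the step-up procedure `A_X` —
the largest `G ⊆ H` with `T(X, h, min(α·π(h)·β(|G|),1)) = 1` for all `h ∈ G` — satisfies
`FDR(A) = E_X[|A_X ∩ H0| / |A_X|] ≤ π(H0)·α ≤ α` (ratio `0` when `A_X = ∅`),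
regardless of the dependence structure of the test statistics. -/
theorem stepup_procedure_FDR_control
    {𝒳 : Type*} [MeasurableSpace 𝒳] {H : Type*} [Fintype H] [DecidableEq H]
    (P : Measure 𝒳) [IsProbabilityMeasure P]
    (α : ℝ) (hα0 : 0 ≤ α) (hα1 : α ≤ 1)
    (T : 𝒳 → H → ℝ → Bool)
    (hTmeas : ∀ (h : H) (a : ℝ), MeasurableSet {x : 𝒳 | T x h a = true})
    (hTmono : ∀ (x : 𝒳) (h : H) (a a' : ℝ), a ≤ a' → T x h a = true → T x h a' = true)
    (hT0 : ∀ (x : 𝒳) (h : H), T x h 0 = false)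
    (H0 : Finset H)
    (hlevel : ∀ h ∈ H0, ∀ a : ℝ, 0 ≤ a → a ≤ 1 →
      P {x : 𝒳 | T x h a = true} ≤ ENNReal.ofReal a)
    (π : H → ℝ) (hπnn : ∀ h, 0 ≤ π h) (hπsum : ∑ h, π h = 1)
    (γ : ℕ → ℝ) (hγnn : ∀ i, 0 ≤ γ i)
    (hγsum : ∑ i ∈ Finset.Icc 1 (Fintype.card H), γ i = 1)
    (A : 𝒳 → Finset H)
    (hAself : ∀ x, ∀ h ∈ A x,
      T x h (min (α * π h * ∑ i ∈ Finset.Icc 1 (A x).card, (i : ℝ) * γ i) 1) = true)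
    (hAmax : ∀ (x : 𝒳) (G : Finset H),
      (∀ h ∈ G,
        T x h (min (α * π h * ∑ i ∈ Finset.Icc 1 G.card, (i : ℝ) * γ i) 1) = true) →
      G ⊆ A x) :
    (∫⁻ x, (if (A x).card = 0 then 0
        else ((A x ∩ H0).card : ℝ≥0∞) / ((A x).card : ℝ≥0∞)) ∂P)
        ≤ ENNReal.ofReal ((∑ h ∈ H0, π h) * α)
    ∧ ENNReal.ofReal ((∑ h ∈ H0, π h) * α) ≤ ENNReal.ofReal α :=
  stepup_procedure_FDR_control_general P α hα0 T hTmeas hTmono H0 hlevel π hπnn hπsum γ hγnn hγsum A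
    hAself
end

section
/- Let ℋ be a finite set, T an increasing family of tests, π a probability distribution on ℋ, γ a probability distribution on {1,…,|ℋ|}, β(k) = Σ_{i≤k} i·γ(i), and α ∈ [0,1]. For fixed observation X, let 𝒢_X = { G ⊆ ℋ : for all h ∈ G, T(X, h, min(α·π(h)·β(|G|),1)) = 1 }. Then 𝒢_X is closed under unions: if G₁, G₂ ∈ 𝒢_X then G₁ ∪ G₂ ∈ 𝒢_X. Consequently 𝒢_X has a unique maximal element (the union of all its members), so the step-up procedure A_X = sup 𝒢_X is well defined. -/
/-!
Raising the size of a rejection set only raises the level `min(α π(h) β(|G|), 1)` at which each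
hypothesis is tested, because the reshaping function `β` is nondecreasing; since the tests are
increasing in the level, a hypothesis rejected within `G₁` stays rejected within `G₁ ∪ G₂`. A
union-closed family of finite sets that contains `∅` has its union as a greatest element.
-/

open Finset

theorem SupClosed.existsUnique_isGreatest {α : Type*} [SemilatticeSup α] {s : Set α}
    (hs : SupClosed s) (hfin : s.Finite) (hne : s.Nonempty) : ∃! M, IsGreatest s M := by
  have hne' : hfin.toFinset.Nonempty := hfin.toFinset_nonempty.mpr hne
  have hM : IsGreatest s (hfin.toFinset.sup' hne' id) :=
    ⟨hs.finsetSup'_mem hne' fun _ ha => hfin.mem_toFinset.mp ha,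
      fun _ ha => le_sup' id (hfin.mem_toFinset.mpr ha)⟩
  exact ⟨_, hM, fun _ hM' => hM'.unique hM⟩

theorem supClosed_setOf_forall_mem {ι : Type*} [DecidableEq ι] {p : ι → Finset ι → Prop}
    (hp : ∀ i, Monotone (p i)) : SupClosed {G : Finset ι | ∀ i ∈ G, p i G} := by
  intro G₁ h₁ G₂ h₂ i hi
  rcases mem_union.mp hi with hi | hi
  · exact hp i subset_union_left (h₁ i hi)
  · exact hp i subset_union_right (h₂ i hi)

def reshaping (γ : ℕ → ℝ) (k : ℕ) : ℝ := ∑ i ∈ Icc 1 k, (i : ℝ) * γ i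

theorem monotone_reshaping {γ : ℕ → ℝ} (hγ : ∀ i, 0 ≤ γ i) : Monotone (reshaping γ) :=
  fun _ _ hkl => sum_le_sum_of_subset_of_nonneg (Icc_subset_Icc_right hkl)
    fun i _ _ => mul_nonneg i.cast_nonneg (hγ i)

theorem stepup_collection_union_closed_and_greatest_general
    {𝒳 : Type*} {H : Type*} [Fintype H] [DecidableEq H]
    (α : ℝ) (hα0 : 0 ≤ α)
    (T : 𝒳 → H → ℝ → Bool)
    (hTmono : ∀ (x : 𝒳) (h : H) (a a' : ℝ), a ≤ a' → T x h a = true → T x h a' = true)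
    (π : H → ℝ) (hπnn : ∀ h, 0 ≤ π h)
    (γ : ℕ → ℝ) (hγnn : ∀ i, 0 ≤ γ i)
    (X : 𝒳) :
    (∀ G₁ G₂ : Finset H,
      (∀ h ∈ G₁,
        T X h (min (α * π h * ∑ i ∈ Finset.Icc 1 G₁.card, (i : ℝ) * γ i) 1) = true) →
      (∀ h ∈ G₂,
        T X h (min (α * π h * ∑ i ∈ Finset.Icc 1 G₂.card, (i : ℝ) * γ i) 1) = true) →
      ∀ h ∈ G₁ ∪ G₂,
        T X h (min (α * π h * ∑ i ∈ Finset.Icc 1 (G₁ ∪ G₂).card, (i : ℝ) * γ i) 1) = true)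
    ∧ ∃! M : Finset H,
        (∀ h ∈ M,
          T X h (min (α * π h * ∑ i ∈ Finset.Icc 1 M.card, (i : ℝ) * γ i) 1) = true)
        ∧ ∀ G : Finset H,
          (∀ h ∈ G,
            T X h (min (α * π h * ∑ i ∈ Finset.Icc 1 G.card, (i : ℝ) * γ i) 1) = true) →
          G ⊆ M := by
  have hlevel (h : H) :
      Monotone fun G : Finset H => min (α * π h * reshaping γ G.card) 1 :=
    fun _ _ hG => min_le_min_right 1 <| mul_le_mul_of_nonneg_left
      (monotone_reshaping hγnn (card_le_card hG)) (mul_nonneg hα0 (hπnn h))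
  have hclosed := supClosed_setOf_forall_mem fun h _ _ hG => hTmono X h _ _ (hlevel h hG)
  exact ⟨fun _ _ h₁ h₂ => hclosed h₁ h₂,
    hclosed.existsUnique_isGreatest (Set.toFinite _) ⟨∅, fun _ h => absurd h (notMem_empty _)⟩⟩

/-- **The step-up procedure is well defined.** For a fixed observation `X`, the collection
`𝒢_X` of sets `G ⊆ H` that are self-consistent for the level function
`(h, G) ↦ min(α·π(h)·β(|G|), 1)` (with `β(k) = Σ_{i ≤ k} i·γ(i)`, `T` an increasing family
of tests, `π` a prior on `H` and `γ` a prior on `{1,…,|H|}`) is closed under unions;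
consequently it has a unique greatest element (the union of all its members), so the
step-up procedure `A_X = sup 𝒢_X` is well defined. -/
theorem stepup_collection_union_closed_and_greatest
    {𝒳 : Type*} {H : Type*} [Fintype H] [DecidableEq H]
    (α : ℝ) (hα0 : 0 ≤ α) (hα1 : α ≤ 1)
    (T : 𝒳 → H → ℝ → Bool)
    (hTmono : ∀ (x : 𝒳) (h : H) (a a' : ℝ), a ≤ a' → T x h a = true → T x h a' = true)
    (hT0 : ∀ (x : 𝒳) (h : H), T x h 0 = false)
    (π : H → ℝ) (hπnn : ∀ h, 0 ≤ π h) (hπsum : ∑ h, π h = 1)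
    (γ : ℕ → ℝ) (hγnn : ∀ i, 0 ≤ γ i)
    (hγsum : ∑ i ∈ Finset.Icc 1 (Fintype.card H), γ i = 1)
    (X : 𝒳) :
    (∀ G₁ G₂ : Finset H,
      (∀ h ∈ G₁,
        T X h (min (α * π h * ∑ i ∈ Finset.Icc 1 G₁.card, (i : ℝ) * γ i) 1) = true) →
      (∀ h ∈ G₂,
        T X h (min (α * π h * ∑ i ∈ Finset.Icc 1 G₂.card, (i : ℝ) * γ i) 1) = true) →
      ∀ h ∈ G₁ ∪ G₂,
        T X h (min (α * π h * ∑ i ∈ Finset.Icc 1 (G₁ ∪ G₂).card, (i : ℝ) * γ i) 1) = true)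
    ∧ ∃! M : Finset H,
        (∀ h ∈ M,
          T X h (min (α * π h * ∑ i ∈ Finset.Icc 1 M.card, (i : ℝ) * γ i) 1) = true)
        ∧ ∀ G : Finset H,
          (∀ h ∈ G,
            T X h (min (α * π h * ∑ i ∈ Finset.Icc 1 G.card, (i : ℝ) * γ i) 1) = true) →
          G ⊆ M :=
  stepup_collection_union_closed_and_greatest_general α hα0 T hTmono π hπnn γ hγnn X
end

section
/- (Benjamini–Yekutieli procedure via Occam's hammer.) Let ℋ be a finite set of m null hypotheses, α ∈ [0,1], T an increasing family of tests, and ℋ₀ ⊆ ℋ the set of true nulls, so that P(T(X,h,a)=1) ≤ a for all h ∈ ℋ₀ and a ∈ [0,1]. Let κ = Σ_{i=1}^{m} 1/i. Define A_X = the largest set G ⊆ ℋ such that for all h ∈ G, T(X, h, min(α·|G|/(m·κ), 1)) = 1. Then E_{X~P}[ |A_X ∩ ℋ₀| / |A_X| ] ≤ α·|ℋ₀|/m ≤ α (with the ratio taken to be 0 when A_X = ∅), with no assumption on the dependence between the individual tests. -/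
/-!
The false discovery proportion is `∑_{h ∈ H0} 1[h ∈ A_X] / |A_X|`. If `h ∈ A_X`, the test
of `h` rejects at level `ℓ(|A_X|)`, where `ℓ(i) = α i / (m κ)`, hence at every level `ℓ(i)`
with `i ≥ |A_X|`, the tests being increasing. Abel summation,
`1/k = ∑_{i=k}^m 1/(i(i+1)) + 1/(m+1)`, then bounds `1[h ∈ A_X] / |A_X|` by a fixed
combination of the events `{T(X,h,ℓ(i)) = 1}`, in which `A_X` no longer appears. For a true
null its expectation is at most `∑_{i=1}^m ℓ(i)/(i(i+1)) + ℓ(m)/(m+1) = α/m`, whatever the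
dependence between the tests.
-/

open MeasureTheory Finset
open scoped ENNReal

theorem sum_Icc_one_div_mul_succ_add_one_div {k m : ℕ} (hk : 1 ≤ k) (hkm : k ≤ m) :
    ∑ i ∈ Icc k m, (1 : ℝ) / (i * (i + 1)) + 1 / (m + 1) = 1 / k := by
  induction m, hkm using Nat.le_induction with
  | base =>
    rw [Icc_self, sum_singleton]
    field_simp
    ring
  | succ n hkn ih =>
    rw [sum_Icc_succ_top (by omega), ← ih]
    push_cast
    field_simp
    ring

theorem sum_Icc_one_div_mul_succ_mul_add (m : ℕ) :
    ∑ i ∈ Icc 1 m, (1 : ℝ) / (i * (i + 1)) * i + m / (m + 1)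
      = ∑ i ∈ Icc 1 m, (1 : ℝ) / i := by
  induction m with
  | zero => simp
  | succ n ih =>
    rw [sum_Icc_succ_top (by omega), sum_Icc_succ_top (by omega), ← ih]
    push_cast
    field_simp
    ring

section StepUpMajorant

variable {Ω : Type*} (S : ℕ → Set Ω) (m : ℕ)

noncomputable def stepUpMajorant (x : Ω) : ℝ≥0∞ :=
  ∑ i ∈ Icc 1 m, (S i).indicator (fun _ => ENNReal.ofReal (1 / (i * (i + 1)))) x
    + (S m).indicator (fun _ => ENNReal.ofReal (1 / (m + 1))) x

variable {S m}

theorem inv_le_stepUpMajorant (hS : Monotone S) {k : ℕ} (hk : 1 ≤ k) (hkm : k ≤ m) {x : Ω}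
    (hx : x ∈ S k) : (k : ℝ≥0∞)⁻¹ ≤ stepUpMajorant S m x := by
  have hmem : ∀ i, k ≤ i → x ∈ S i := fun i hi => hS hi hx
  calc (k : ℝ≥0∞)⁻¹
      = ENNReal.ofReal (∑ i ∈ Icc k m, (1 : ℝ) / (i * (i + 1)) + 1 / (m + 1)) := by
        rw [sum_Icc_one_div_mul_succ_add_one_div hk hkm, one_div,
          ENNReal.ofReal_inv_of_pos (by exact_mod_cast hk), ENNReal.ofReal_natCast]
    _ = ∑ i ∈ Icc k m, ENNReal.ofReal (1 / (i * (i + 1))) + ENNReal.ofReal (1 / (m + 1)) := by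
        rw [ENNReal.ofReal_add (by positivity) (by positivity),
          ENNReal.ofReal_sum_of_nonneg fun _ _ => by positivity]
    _ ≤ stepUpMajorant S m x := by
        rw [stepUpMajorant, Set.indicator_of_mem (hmem m hkm)]
        gcongr
        calc ∑ i ∈ Icc k m, ENNReal.ofReal (1 / (i * (i + 1)))
            = ∑ i ∈ Icc k m, (S i).indicator (fun _ => ENNReal.ofReal (1 / (i * (i + 1)))) x :=
              sum_congr rfl fun i hi => by rw [Set.indicator_of_mem (hmem i (mem_Icc.1 hi).1)]
          _ ≤ _ := sum_le_sum_of_subset (Icc_subset_Icc_left hk)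

variable [MeasurableSpace Ω]

theorem measurable_stepUpMajorant (hSm : ∀ i, MeasurableSet (S i)) :
    Measurable (stepUpMajorant S m) :=
  (Finset.measurable_sum _ fun i _ => measurable_const.indicator (hSm i)).add
    (measurable_const.indicator (hSm m))

theorem lintegral_stepUpMajorant_le (μ : Measure Ω) (hSm : ∀ i, MeasurableSet (S i)) {c : ℝ}
    (hc : 0 ≤ c) (hμ : ∀ i, μ (S i) ≤ ENNReal.ofReal (c * i)) :
    ∫⁻ x, stepUpMajorant S m x ∂μ
      ≤ ENNReal.ofReal (c * ∑ i ∈ Icc 1 m, (1 : ℝ) / i) := by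
  rw [← sum_Icc_one_div_mul_succ_mul_add]
  simp only [stepUpMajorant]
  rw [lintegral_add_right _ (measurable_const.indicator (hSm m)),
    lintegral_finsetSum _ fun i _ => measurable_const.indicator (hSm i)]
  simp only [lintegral_indicator_const (hSm _)]
  calc ∑ i ∈ Icc 1 m, ENNReal.ofReal (1 / (i * (i + 1))) * μ (S i)
        + ENNReal.ofReal (1 / (m + 1)) * μ (S m)
      ≤ ∑ i ∈ Icc 1 m, ENNReal.ofReal (1 / (i * (i + 1))) * ENNReal.ofReal (c * i)
        + ENNReal.ofReal (1 / (m + 1)) * ENNReal.ofReal (c * m) := by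
        gcongr <;> apply hμ
    _ = ENNReal.ofReal
          (∑ i ∈ Icc 1 m, 1 / (i * (i + 1)) * (c * i) + 1 / (m + 1) * (c * m)) := by
        rw [ENNReal.ofReal_add (sum_nonneg fun _ _ => by positivity) (by positivity),
          ENNReal.ofReal_sum_of_nonneg fun _ _ => by positivity]
        exact congr_arg₂ (· + ·)
          (sum_congr rfl fun i _ => (ENNReal.ofReal_mul (by positivity)).symm)
          (ENNReal.ofReal_mul (by positivity)).symm
    _ = _ := by
        rw [mul_add, mul_sum]
        congr 2
        · exact sum_congr rfl fun _ _ => by ring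
        · ring

end StepUpMajorant

theorem ite_card_inter_div_card_eq_sum {α : Type*} [DecidableEq α] (A B : Finset α) :
    (if A.card = 0 then 0 else ((A ∩ B).card : ℝ≥0∞) / (A.card : ℝ≥0∞))
      = ∑ h ∈ B, if h ∈ A then (A.card : ℝ≥0∞)⁻¹ else 0 := by
  rw [sum_ite_mem, sum_const, nsmul_eq_mul, inter_comm B A]
  split_ifs with hA
  · simp [card_eq_zero.1 hA]
  · rw [div_eq_mul_inv]

noncomputable def stepUpLevel (α : ℝ) (m i : ℕ) : ℝ :=
  min (α * i / (m * ∑ j ∈ Icc 1 m, (1 : ℝ) / j)) 1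

theorem stepUpLevel_mono {α : ℝ} (hα : 0 ≤ α) (m : ℕ) : Monotone (stepUpLevel α m) :=
  fun _ _ hij => min_le_min_right _ (by gcongr)

theorem lintegral_stepUpMajorant_stepUpLevel_le {Ω : Type*} [MeasurableSpace Ω] (μ : Measure Ω)
    {T : Ω → ℝ → Bool} (hTmeas : ∀ a, MeasurableSet {x | T x a = true})
    (hlevel : ∀ a, 0 ≤ a → a ≤ 1 → μ {x | T x a = true} ≤ ENNReal.ofReal a)
    {α : ℝ} (hα : 0 ≤ α) {m : ℕ} (hm : 1 ≤ m) :
    ∫⁻ x, stepUpMajorant (fun i => {x | T x (stepUpLevel α m i) = true}) m x ∂μ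
      ≤ ENNReal.ofReal (α / m) := by
  set κ : ℝ := ∑ j ∈ Icc 1 m, (1 : ℝ) / j
  have hκ : 1 ≤ κ := by
    simpa [κ] using single_le_sum (f := fun j : ℕ => (1 : ℝ) / j) (fun _ _ => by positivity)
      (left_mem_Icc.2 hm)
  calc _ ≤ ENNReal.ofReal (α / (m * κ) * κ) :=
        lintegral_stepUpMajorant_le μ (fun _ => hTmeas _) (by positivity) fun i =>
          (hlevel _ (by positivity) (min_le_right _ _)).trans
            (ENNReal.ofReal_le_ofReal (by rw [div_mul_eq_mul_div]; exact min_le_left _ _))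
    _ = ENNReal.ofReal (α / m) := by
        congr 1
        field_simp

theorem benjamini_yekutieli_FDR_control_general
    {𝒳 : Type*} [MeasurableSpace 𝒳] {H : Type*} [Fintype H] [DecidableEq H]
    (P : Measure 𝒳)
    (α : ℝ) (hα0 : 0 ≤ α)
    (T : 𝒳 → H → ℝ → Bool)
    (hTmeas : ∀ (h : H) (a : ℝ), MeasurableSet {x : 𝒳 | T x h a = true})
    (hTmono : ∀ (x : 𝒳) (h : H) (a a' : ℝ), a ≤ a' → T x h a = true → T x h a' = true)
    (H0 : Finset H)
    (hlevel : ∀ h ∈ H0, ∀ a : ℝ, 0 ≤ a → a ≤ 1 →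
      P {x : 𝒳 | T x h a = true} ≤ ENNReal.ofReal a)
    (A : 𝒳 → Finset H)
    (hAself : ∀ x, ∀ h ∈ A x,
      T x h (min (α * ((A x).card : ℝ) /
        ((Fintype.card H : ℝ) * ∑ i ∈ Finset.Icc 1 (Fintype.card H), (1 : ℝ) / i)) 1)
        = true) :
    (∫⁻ x, (if (A x).card = 0 then 0
        else ((A x ∩ H0).card : ℝ≥0∞) / ((A x).card : ℝ≥0∞)) ∂P)
        ≤ ENNReal.ofReal (α * (H0.card : ℝ) / (Fintype.card H : ℝ))
    ∧ ENNReal.ofReal (α * (H0.card : ℝ) / (Fintype.card H : ℝ)) ≤ ENNReal.ofReal α := by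
  set m := Fintype.card H
  set S : H → ℕ → Set 𝒳 := fun h i => {x | T x h (stepUpLevel α m i) = true}
  have hFDP : ∀ x, (if (A x).card = 0 then 0
      else ((A x ∩ H0).card : ℝ≥0∞) / ((A x).card : ℝ≥0∞))
        ≤ ∑ h ∈ H0, stepUpMajorant (S h) m x := by
    intro x
    rw [ite_card_inter_div_card_eq_sum]
    refine sum_le_sum fun h _ => ?_
    split_ifs with hA
    · exact inv_le_stepUpMajorant (fun i j hij x => hTmono x h _ _ (stepUpLevel_mono hα0 m hij))
        (card_pos.2 ⟨h, hA⟩) (card_le_univ _) (hAself x h hA)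
    · exact zero_le
  refine ⟨?_, ENNReal.ofReal_le_ofReal (div_le_of_le_mul₀ (by positivity) hα0
    (mul_le_mul_of_nonneg_left (by exact_mod_cast card_le_univ H0) hα0))⟩
  calc _ ≤ ∫⁻ x, ∑ h ∈ H0, stepUpMajorant (S h) m x ∂P := lintegral_mono hFDP
    _ = ∑ h ∈ H0, ∫⁻ x, stepUpMajorant (S h) m x ∂P :=
        lintegral_finsetSum _ fun h _ => measurable_stepUpMajorant fun i => hTmeas h _
    _ ≤ ∑ _h ∈ H0, ENNReal.ofReal (α / m) := sum_le_sum fun h hh =>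
        lintegral_stepUpMajorant_stepUpLevel_le P (hTmeas h) (hlevel h hh) hα0
          (Fintype.card_pos_iff.2 ⟨h⟩)
    _ = ENNReal.ofReal (α * H0.card / m) := by
        rw [sum_const, nsmul_eq_mul, ← ENNReal.ofReal_natCast,
          ← ENNReal.ofReal_mul (by positivity)]
        ring_nf

/-- **The Benjamini–Yekutieli step-up procedure, recovered via Occam's hammer.**
`H` is a finite pool of `m` null hypotheses, `T` an increasing family of tests, `H0` the
set of true nulls (each individual test having level `a`: `P(T(X,h,a)=1) ≤ a` for
`h ∈ H0`), and `κ = Σ_{i=1}^m 1/i`. The step-up procedure `A_X` — the largest `G ⊆ H`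
with `T(X, h, min(α·|G|/(m·κ), 1)) = 1` for all `h ∈ G` — has false discovery rate
`E_X[|A_X ∩ H0| / |A_X|] ≤ α·|H0|/m ≤ α` (ratio `0` when `A_X = ∅`), with no assumption
on the dependence between the individual tests. -/
theorem benjamini_yekutieli_FDR_control
    {𝒳 : Type*} [MeasurableSpace 𝒳] {H : Type*} [Fintype H] [DecidableEq H] [Nonempty H]
    (P : Measure 𝒳) [IsProbabilityMeasure P]
    (α : ℝ) (hα0 : 0 ≤ α) (hα1 : α ≤ 1)
    (T : 𝒳 → H → ℝ → Bool)
    (hTmeas : ∀ (h : H) (a : ℝ), MeasurableSet {x : 𝒳 | T x h a = true})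
    (hTmono : ∀ (x : 𝒳) (h : H) (a a' : ℝ), a ≤ a' → T x h a = true → T x h a' = true)
    (hT0 : ∀ (x : 𝒳) (h : H), T x h 0 = false)
    (H0 : Finset H)
    (hlevel : ∀ h ∈ H0, ∀ a : ℝ, 0 ≤ a → a ≤ 1 →
      P {x : 𝒳 | T x h a = true} ≤ ENNReal.ofReal a)
    (A : 𝒳 → Finset H)
    (hAself : ∀ x, ∀ h ∈ A x,
      T x h (min (α * ((A x).card : ℝ) /
        ((Fintype.card H : ℝ) * ∑ i ∈ Finset.Icc 1 (Fintype.card H), (1 : ℝ) / i)) 1)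
        = true)
    (hAmax : ∀ (x : 𝒳) (G : Finset H),
      (∀ h ∈ G,
        T x h (min (α * (G.card : ℝ) /
          ((Fintype.card H : ℝ) * ∑ i ∈ Finset.Icc 1 (Fintype.card H), (1 : ℝ) / i)) 1)
          = true) →
      G ⊆ A x) :
    (∫⁻ x, (if (A x).card = 0 then 0
        else ((A x ∩ H0).card : ℝ≥0∞) / ((A x).card : ℝ≥0∞)) ∂P)
        ≤ ENNReal.ofReal (α * (H0.card : ℝ) / (Fintype.card H : ℝ))
    ∧ ENNReal.ofReal (α * (H0.card : ℝ) / (Fintype.card H : ℝ)) ≤ ENNReal.ofReal α :=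
  benjamini_yekutieli_FDR_control_general P α hα0 T hTmeas hTmono H0 hlevel A hAself
end
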